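/- arXiv:2508.10692 — 8 statements merged into one kernel-verified Lean document; each statement's English description precedes it below -/
import Mathlib

section
/- Let X be a set, J : X → ℝ a function bounded from below, T : X × (0,∞) → X an oracle, pred : X × (0,∞) → [0,∞) a prediction function, C : X → [0,∞) a criticality measure, and define the actual reduction ared(x,Δ) := J(x) − J(T(x,Δ)). Assume there exist a function Δa : X → [0,∞], constants Δb, Δc > 0, a nondecreasing function f : [0,∞) → [0,∞) with f(ζ) > 0 for ζ > 0, and constants c ≥ 0, L, δ > 0, s > 1, η ∈ (0,1) such that for every x ∈ X with C(x) > 0: (I) pred(x,Δ₁) ≥ pred(x,Δ₂) whenever Δ₁ ≥ Δ₂ > 0; (II) pred(x,Δ) ≥ f(C(x))·Δ − c·Δ^s for all Δ ∈ (0, Δa(x)); (III) ared(x,Δ) − η·pred(x,Δ) ≥ (1−η)·(f(C(x))·Δ − c·Δ^s) for all Δ ∈ (0, Δa(x)); (III.E) ared(x,Δ) ≥ η·pred(x,Δ) and pred(x,Δ) ≥ δ for all Δ ∈ [Δa(x), Δb]; (IV) for every Δ ∈ (0, Δc], either |C(T(x,Δ)) − C(x)| ≤ L·Δ, or pred(x,Δ)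 ≥ δ. Fix 0 < γ₁ < 1 ≤ γ₂, 0 < Δ₀ < Δmax ≤ ∞ and x₀ ∈ X, and define the trust-region iteration: as long as C(x_n) > 0, if ared(x_n,Δ_n) ≥ η·pred(x_n,Δ_n) then x_{n+1} := T(x_n,Δ_n) and Δ_{n+1} := min{γ₂Δ_n, Δmax}, otherwise x_{n+1} := x_n and Δ_{n+1} := γ₁Δ_n. Then either the iteration reaches a point x_n with C(x_n) = 0, or it produces an infinite sequence (x_n) with lim_{n→∞} C(x_n) = 0. -/
open Filter
open scoped ENNReal Topology

set_option maxHeartbeats 1000000 in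
/-- Convergence of the abstract trust-region method (Theorem 2.2). -/
theorem abstract_trust_region_method_convergence
    {X : Type*} (J : X → ℝ) (T : X → ℝ → X) (pred : X → ℝ → ℝ) (C : X → ℝ)
    -- `J` is bounded from below
    (hJbdd : ∃ B : ℝ, ∀ x : X, B ≤ J x)
    -- `pred` has values in `[0,∞)` and `C` has values in `[0,∞)`
    (hpred_nonneg : ∀ (x : X) (Δ : ℝ), 0 < Δ → 0 ≤ pred x Δ)
    (hC_nonneg : ∀ x : X, 0 ≤ C x)
    -- the data of the assumption
    (Δa : X → ℝ≥0∞) (Δb Δc : ℝ) (hΔb : 0 < Δb) (hΔc : 0 < Δc)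
    (f : ℝ → ℝ) (hf_nonneg : ∀ ζ : ℝ, 0 ≤ ζ → 0 ≤ f ζ)
    (hf_mono : MonotoneOn f (Set.Ici 0))
    (hf_pos : ∀ ζ : ℝ, 0 < ζ → 0 < f ζ)
    (c L δ s η : ℝ) (hc : 0 ≤ c) (hL : 0 < L) (hδ : 0 < δ) (hs : 1 < s)
    (hη0 : 0 < η) (hη1 : η < 1)
    -- (I) monotonicity
    (hI : ∀ x : X, 0 < C x → ∀ Δ₁ Δ₂ : ℝ, 0 < Δ₂ → Δ₂ ≤ Δ₁ →
      pred x Δ₂ ≤ pred x Δ₁)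
    -- (II) sufficient decrease, for all Δ ∈ (0, Δa x)
    (hII : ∀ x : X, 0 < C x → ∀ Δ : ℝ, 0 < Δ → ENNReal.ofReal Δ < Δa x →
      f (C x) * Δ - c * Δ ^ s ≤ pred x Δ)
    -- (III) accuracy, for all Δ ∈ (0, Δa x)
    (hIII : ∀ x : X, 0 < C x → ∀ Δ : ℝ, 0 < Δ → ENNReal.ofReal Δ < Δa x →
      (1 - η) * (f (C x) * Δ - c * Δ ^ s) ≤ (J x - J (T x Δ)) - η * pred x Δ)
    -- (III.E) exceptional accuracy, for all Δ ∈ [Δa x, Δb]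
    (hIIIE : ∀ x : X, 0 < C x → ∀ Δ : ℝ, 0 < Δ →
      Δa x ≤ ENNReal.ofReal Δ → Δ ≤ Δb →
      η * pred x Δ ≤ J x - J (T x Δ) ∧ δ ≤ pred x Δ)
    -- (IV) stability or exceptional prediction, for all Δ ∈ (0, Δc]
    (hIV : ∀ x : X, 0 < C x → ∀ Δ : ℝ, 0 < Δ → Δ ≤ Δc →
      |C (T x Δ) - C x| ≤ L * Δ ∨ δ ≤ pred x Δ)
    -- algorithmic parameters
    (γ₁ γ₂ : ℝ) (hγ₁0 : 0 < γ₁) (hγ₁1 : γ₁ < 1) (hγ₂ : 1 ≤ γ₂)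
    (Δmax : ℝ≥0∞) (hΔmax : 0 < Δmax)
    -- the iterates of the trust-region method
    (x : ℕ → X) (Δ : ℕ → ℝ)
    (hΔ₀pos : 0 < Δ 0) (hΔ₀lt : ENNReal.ofReal (Δ 0) < Δmax)
    (hstep : ∀ n : ℕ, 0 < C (x n) →
      ((η * pred (x n) (Δ n) ≤ J (x n) - J (T (x n) (Δ n)) →
          x (n + 1) = T (x n) (Δ n) ∧
          Δ (n + 1) = (min (ENNReal.ofReal (γ₂ * Δ n)) Δmax).toReal) ∧
        (¬ (η * pred (x n) (Δ n) ≤ J (x n) - J (T (x n) (Δ n))) →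
          x (n + 1) = x n ∧ Δ (n + 1) = γ₁ * Δ n))) :
    (∃ n : ℕ, C (x n) = 0) ∨
      Tendsto (fun n : ℕ => C (x n)) atTop (𝓝 0) := by
  rcases Classical.em (∃ n : ℕ, C (x n) = 0) with h0 | h0
  · exact Or.inl h0
  right
  have hpos : ∀ n : ℕ, 0 < C (x n) :=
    fun n => (hC_nonneg (x n)).lt_of_ne fun hn => h0 ⟨n, hn.symm⟩
  -- positivity and boundedness of the radii
  have hΔinv : ∀ n : ℕ, 0 < Δ n ∧ ENNReal.ofReal (Δ n) ≤ Δmax := by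
    intro n
    induction n with
    | zero => exact ⟨hΔ₀pos, hΔ₀lt.le⟩
    | succ n ih =>
      obtain ⟨h1, h2⟩ := ih
      by_cases hsn : η * pred (x n) (Δ n) ≤ J (x n) - J (T (x n) (Δ n))
      · obtain ⟨_, hΔeq⟩ := (hstep n (hpos n)).1 hsn
        have hγΔ : 0 < γ₂ * Δ n := mul_pos (lt_of_lt_of_le one_pos hγ₂) h1
        have hne : min (ENNReal.ofReal (γ₂ * Δ n)) Δmax ≠ ⊤ :=
          ne_top_of_le_ne_top ENNReal.ofReal_ne_top (min_le_left _ _)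
        constructor
        · rw [hΔeq]
          exact ENNReal.toReal_pos (lt_min (ENNReal.ofReal_pos.2 hγΔ) hΔmax).ne' hne
        · rw [hΔeq, ENNReal.ofReal_toReal hne]
          exact min_le_right _ _
      · obtain ⟨_, hΔeq⟩ := (hstep n (hpos n)).2 hsn
        refine ⟨by rw [hΔeq]; exact mul_pos hγ₁0 h1, ?_⟩
        rw [hΔeq]
        exact le_trans (ENNReal.ofReal_le_ofReal (mul_le_of_le_one_left h1.le hγ₁1.le)) h2
  -- on a successful step the radius does not decrease
  have hSuccΔ : ∀ n : ℕ, η * pred (x n) (Δ n) ≤ J (x n) - J (T (x n) (Δ n)) →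
      Δ n ≤ Δ (n + 1) := by
    intro n hsn
    obtain ⟨_, hΔeq⟩ := (hstep n (hpos n)).1 hsn
    have h1 := (hΔinv n).1
    have hle : ENNReal.ofReal (Δ n) ≤ min (ENNReal.ofReal (γ₂ * Δ n)) Δmax :=
      le_min (ENNReal.ofReal_le_ofReal (le_mul_of_one_le_left h1.le hγ₂)) (hΔinv n).2
    have hne : min (ENNReal.ofReal (γ₂ * Δ n)) Δmax ≠ ⊤ :=
      ne_top_of_le_ne_top ENNReal.ofReal_ne_top (min_le_left _ _)
    calc Δ n = (ENNReal.ofReal (Δ n)).toReal := (ENNReal.toReal_ofReal h1.le).symm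
      _ ≤ (min (ENNReal.ofReal (γ₂ * Δ n)) Δmax).toReal := ENNReal.toReal_mono hne hle
      _ = Δ (n + 1) := hΔeq.symm
  -- J is nonincreasing along the iterates
  have hJstep : ∀ n : ℕ, J (x (n + 1)) ≤ J (x n) := by
    intro n
    by_cases hsn : η * pred (x n) (Δ n) ≤ J (x n) - J (T (x n) (Δ n))
    · obtain ⟨hx1, _⟩ := (hstep n (hpos n)).1 hsn
      have hp : 0 ≤ pred (x n) (Δ n) := hpred_nonneg _ _ (hΔinv n).1
      have : 0 ≤ η * pred (x n) (Δ n) := mul_nonneg hη0.le hp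
      rw [hx1]; linarith
    · rw [((hstep n (hpos n)).2 hsn).1]
  have hJanti : Antitone fun n : ℕ => J (x n) := antitone_nat_of_succ_le hJstep
  obtain ⟨B, hB⟩ := hJbdd
  have hbdd : BddBelow (Set.range fun n : ℕ => J (x n)) := by
    refine ⟨B, ?_⟩
    rintro y ⟨n, rfl⟩
    exact hB _
  set Jinf := ⨅ n : ℕ, J (x n) with hJinf
  have hJtend : Tendsto (fun n : ℕ => J (x n)) atTop (𝓝 Jinf) :=
    tendsto_atTop_ciInf hJanti hbdd
  have hJinf_le : ∀ n : ℕ, Jinf ≤ J (x n) := fun n => ciInf_le hbdd n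
  -- the core lemma: small radii give successful steps with quantified prediction
  have hL1 : ∀ ζ : ℝ, 0 < ζ → ∃ Dst : ℝ, 0 < Dst ∧ Dst ≤ Δb ∧ Dst ≤ Δc ∧
      ∀ x' : X, ζ ≤ C x' → ∀ Δ' : ℝ, 0 < Δ' → Δ' ≤ Dst →
        (η * pred x' Δ' ≤ J x' - J (T x' Δ')) ∧ min (f ζ * Δ' / 2) δ ≤ pred x' Δ' := by
    intro ζ hζ
    have hfζ : 0 < f ζ := hf_pos ζ hζ
    -- choose the threshold Dst together with a key estimate on c * Δ' ^ s
    obtain ⟨Dst, hDst0, hDstb, hDstc, hkey⟩ :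
        ∃ Dst : ℝ, 0 < Dst ∧ Dst ≤ Δb ∧ Dst ≤ Δc ∧
          ∀ Δ' : ℝ, 0 < Δ' → Δ' ≤ Dst → c * Δ' ^ s ≤ f ζ / 2 * Δ' := by
      rcases eq_or_lt_of_le hc with hc0 | hc0
      · refine ⟨min Δb Δc, lt_min hΔb hΔc, min_le_left _ _, min_le_right _ _, ?_⟩
        intro Δ' hΔ'0 _
        rw [← hc0]
        have : (0:ℝ) ≤ Δ' ^ s := Real.rpow_nonneg hΔ'0.le s
        nlinarith
      · set q : ℝ := (f ζ / (2 * c)) ^ (s - 1)⁻¹ with hq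
        have hq0 : 0 < q := Real.rpow_pos_of_pos (by positivity) _
        refine ⟨min (min Δb Δc) q, lt_min (lt_min hΔb hΔc) hq0,
          le_trans (min_le_left _ _) (min_le_left _ _),
          le_trans (min_le_left _ _) (min_le_right _ _), ?_⟩
        intro Δ' hΔ'0 hΔ'le
        have hs1 : s - 1 ≠ 0 := by linarith
        have hqpow : q ^ (s - 1) = f ζ / (2 * c) := by
          rw [hq, ← Real.rpow_mul (by positivity), inv_mul_cancel₀ hs1, Real.rpow_one]
        have hΔ'q : Δ' ≤ q := le_trans hΔ'le (min_le_right _ _)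
        have hpow : Δ' ^ (s - 1) ≤ f ζ / (2 * c) := by
          rw [← hqpow]
          exact Real.rpow_le_rpow hΔ'0.le hΔ'q (by linarith)
        have hsplit : Δ' ^ s = Δ' ^ (s - 1) * Δ' := by
          rw [← Real.rpow_add_one hΔ'0.ne' (s - 1)]
          congr 1
          ring
        have hc2 : c * Δ' ^ (s - 1) ≤ f ζ / 2 := by
          have h := mul_le_mul_of_nonneg_left hpow hc0.le
          have he : c * (f ζ / (2 * c)) = f ζ / 2 := by
            field_simp
          linarith
        rw [hsplit, ← mul_assoc]
        exact mul_le_mul_of_nonneg_right hc2 hΔ'0.le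
    refine ⟨Dst, hDst0, hDstb, hDstc, ?_⟩
    intro x' hx' Δ' hΔ'0 hΔ'le
    have hCx' : 0 < C x' := lt_of_lt_of_le hζ hx'
    have hfmono : f ζ ≤ f (C x') :=
      hf_mono (Set.mem_Ici.mpr hζ.le) (Set.mem_Ici.mpr (hC_nonneg x')) hx'
    have hkey' := hkey Δ' hΔ'0 hΔ'le
    have hmul : f ζ * Δ' ≤ f (C x') * Δ' := mul_le_mul_of_nonneg_right hfmono hΔ'0.le
    have hlow : f ζ / 2 * Δ' ≤ f (C x') * Δ' - c * Δ' ^ s := by linarith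
    have hlow0 : 0 < f ζ / 2 * Δ' := by positivity
    by_cases hcase : ENNReal.ofReal Δ' < Δa x'
    · have hii := hII x' hCx' Δ' hΔ'0 hcase
      have hiii := hIII x' hCx' Δ' hΔ'0 hcase
      constructor
      · have h1 : 0 ≤ (1 - η) * (f (C x') * Δ' - c * Δ' ^ s) :=
          mul_nonneg (by linarith) (by linarith)
        linarith
      · have : min (f ζ * Δ' / 2) δ ≤ f ζ * Δ' / 2 := min_le_left _ _
        have heq : f ζ * Δ' / 2 = f ζ / 2 * Δ' := by ring
        linarith
    · have hge : Δa x' ≤ ENNReal.ofReal Δ' := le_of_not_gt hcase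
      obtain ⟨h1, h2⟩ := hIIIE x' hCx' Δ' hΔ'0 hge (hΔ'le.trans hDstb)
      exact ⟨h1, (min_le_right _ _).trans h2⟩
  -- no subsequence stays away from zero: liminf C (x n) = 0
  have hliminf : ∀ ε : ℝ, 0 < ε → ∀ N : ℕ, ∃ n : ℕ, N ≤ n ∧ C (x n) < ε := by
    intro ε hε N
    by_contra hcon
    push_neg at hcon
    obtain ⟨Dst, hDst0, hDstb, hDstc, hDst⟩ := hL1 ε hε
    set dmin := min (Δ N) (γ₁ * Dst) with hdmin
    have hdmin0 : 0 < dmin := lt_min (hΔinv N).1 (mul_pos hγ₁0 hDst0)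
    have hΔge : ∀ n : ℕ, N ≤ n → dmin ≤ Δ n := by
      intro n hn
      induction n, hn using Nat.le_induction with
      | base => exact min_le_left _ _
      | succ n hn ih =>
        by_cases hΔle : Δ n ≤ Dst
        · have hsucc := (hDst (x n) (hcon n hn) (Δ n) (hΔinv n).1 hΔle).1
          exact ih.trans (hSuccΔ n hsucc)
        · push_neg at hΔle
          have h1 : γ₁ * Δ n ≤ Δ (n + 1) := by
            by_cases hsn : η * pred (x n) (Δ n) ≤ J (x n) - J (T (x n) (Δ n))
            · have h2 := hSuccΔ n hsn
              have h3 : γ₁ * Δ n ≤ Δ n := mul_le_of_le_one_left (hΔinv n).1.le hγ₁1.le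
              linarith
            · rw [((hstep n (hpos n)).2 hsn).2]
          have h2 : γ₁ * Dst ≤ γ₁ * Δ n := mul_le_mul_of_nonneg_left hΔle.le hγ₁0.le
          exact le_trans (min_le_right _ _) (le_trans h2 h1)
    set d'' := min dmin Dst with hd''
    have hd''0 : 0 < d'' := lt_min hdmin0 hDst0
    have hfε : 0 < f ε := hf_pos ε hε
    set κ := η * min (f ε * d'' / 2) δ with hκ
    have hκ0 : 0 < κ := mul_pos hη0 (lt_min (by positivity) hδ)
    have hdrop : ∀ n : ℕ, N ≤ n →
        η * pred (x n) (Δ n) ≤ J (x n) - J (T (x n) (Δ n)) →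
        J (x (n + 1)) ≤ J (x n) - κ := by
      intro n hn hsn
      obtain ⟨hxeq, _⟩ := (hstep n (hpos n)).1 hsn
      have hpd : min (f ε * d'' / 2) δ ≤ pred (x n) d'' :=
        (hDst (x n) (hcon n hn) d'' hd''0 (min_le_right _ _)).2
      have hmono : pred (x n) d'' ≤ pred (x n) (Δ n) :=
        hI (x n) (hpos n) (Δ n) d'' hd''0 ((min_le_left _ _).trans (hΔge n hn))
      have h1 : κ ≤ η * pred (x n) (Δ n) :=
        mul_le_mul_of_nonneg_left (hpd.trans hmono) hη0.le
      rw [hxeq]; linarith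
    have hexSucc : ∀ m : ℕ, N ≤ m → ∃ n : ℕ, m ≤ n ∧
        η * pred (x n) (Δ n) ≤ J (x n) - J (T (x n) (Δ n)) := by
      intro m hm
      by_contra hfail
      push_neg at hfail
      have hgeo : ∀ k : ℕ, Δ (m + k) = γ₁ ^ k * Δ m := by
        intro k
        induction k with
        | zero => simp
        | succ k ih =>
          have hfk := not_le.mpr (hfail (m + k) (Nat.le_add_right _ _))
          rw [show m + (k + 1) = (m + k) + 1 from rfl,
            ((hstep (m + k) (hpos _)).2 hfk).2, ih]
          ring
      have htend : Tendsto (fun k : ℕ => γ₁ ^ k * Δ m) atTop (𝓝 0) := by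
        simpa using (tendsto_pow_atTop_nhds_zero_of_lt_one hγ₁0.le hγ₁1).mul_const (Δ m)
      obtain ⟨k, hk⟩ := (htend.eventually_lt_const hdmin0).exists
      have := hΔge (m + k) (hm.trans (Nat.le_add_right m k))
      rw [hgeo k] at this
      linarith
    have hiter : ∀ k : ℕ, ∃ n : ℕ, N ≤ n ∧ J (x n) ≤ J (x N) - k * κ := by
      intro k
      induction k with
      | zero => exact ⟨N, le_refl _, by simp⟩
      | succ k ih =>
        obtain ⟨n, hn, hJn⟩ := ih
        obtain ⟨p, hp, hps⟩ := hexSucc n hn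
        refine ⟨p + 1, le_trans hn (hp.trans (Nat.le_succ p)), ?_⟩
        have h1 : J (x p) ≤ J (x n) := hJanti hp
        have h2 := hdrop p (hn.trans hp) hps
        push_cast
        linarith
    obtain ⟨k, hk⟩ := exists_nat_gt ((J (x N) - B) / κ)
    obtain ⟨n, _, hJn⟩ := hiter k
    have h1 := hB (x n)
    have h2 : J (x N) - B < k * κ := by
      rw [div_lt_iff₀ hκ0] at hk
      linarith
    linarith
  -- upgrade to a full limit
  suffices hmain : ∀ ε : ℝ, 0 < ε → ∃ N : ℕ, ∀ n : ℕ, N ≤ n → C (x n) < ε by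
    refine Metric.tendsto_atTop.mpr fun ε hε => ?_
    obtain ⟨N, hN⟩ := hmain ε hε
    refine ⟨N, fun n hn => ?_⟩
    rw [Real.dist_eq, sub_zero, abs_of_nonneg (hC_nonneg _)]
    exact hN n hn
  intro ε hε
  by_contra hcon
  push_neg at hcon
  obtain ⟨Dst, hDst0, hDstb, hDstc, hDst⟩ := hL1 (ε / 2) (by linarith)
  have hfε : 0 < f (ε / 2) := hf_pos _ (by linarith)
  set K := 2 * L / (η * f (ε / 2)) with hK
  have hK0 : 0 < K := by positivity
  set ε'' := min (min (η * δ) (η * f (ε / 2) * Dst / 2)) (ε / 2 / K) with hε''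
  have hε''0 : 0 < ε'' := lt_min (lt_min (by positivity) (by positivity)) (by positivity)
  have hε''δ : ε'' ≤ η * δ := (min_le_left _ _).trans (min_le_left _ _)
  have hε''D : ε'' ≤ η * f (ε / 2) * Dst / 2 := (min_le_left _ _).trans (min_le_right _ _)
  have hε''K : K * ε'' ≤ ε / 2 := by
    have h1 : ε'' ≤ ε / 2 / K := min_le_right _ _
    rw [le_div_iff₀ hK0] at h1
    linarith [h1]
  obtain ⟨N, hN⟩ := (hJtend.eventually_lt_const
    (show Jinf < Jinf + ε'' by linarith)).exists
  obtain ⟨m, hmN, hmC⟩ := hcon N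
  obtain ⟨n, hnm, hnC⟩ := hliminf (ε / 2) (by linarith) (m + 1)
  have hclaim : ∀ j : ℕ, m ≤ j → ε - K * (J (x m) - J (x j)) ≤ C (x j) := by
    intro j hj
    induction j, hj using Nat.le_induction with
    | base => simpa using hmC
    | succ j hj ih =>
      have hgap : J (x m) - J (x j) < ε'' := by
        have h1 : J (x m) ≤ J (x N) := hJanti hmN
        have h2 := hJinf_le j
        linarith
      have hKgap : K * (J (x m) - J (x j)) < ε / 2 := by
        have := mul_lt_mul_of_pos_left hgap hK0
        linarith
      have hCj : ε / 2 ≤ C (x j) := by linarith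
      by_cases hsj : η * pred (x j) (Δ j) ≤ J (x j) - J (T (x j) (Δ j))
      · obtain ⟨hxeq, _⟩ := (hstep j (hpos j)).1 hsj
        set a := J (x j) - J (x (j + 1)) with ha
        have hared : J (x j) - J (T (x j) (Δ j)) = a := by rw [ha, hxeq]
        have hpred_le : η * pred (x j) (Δ j) ≤ a := hared ▸ hsj
        have hp0 : 0 ≤ pred (x j) (Δ j) := hpred_nonneg _ _ (hΔinv j).1
        have ha0 : 0 ≤ a := le_trans (mul_nonneg hη0.le hp0) hpred_le
        have haε : a < ε'' := by
          have h1 : J (x j) ≤ J (x N) := hJanti (hmN.trans hj)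
          have h2 := hJinf_le (j + 1)
          have h3 := hN
          rw [ha]; linarith
        set d' := min (Δ j) Dst with hd'
        have hd'0 : 0 < d' := lt_min (hΔinv j).1 hDst0
        have hpd' : min (f (ε / 2) * d' / 2) δ ≤ pred (x j) d' :=
          (hDst (x j) hCj d' hd'0 (min_le_right _ _)).2
        have hmono : pred (x j) d' ≤ pred (x j) (Δ j) :=
          hI (x j) (hpos j) (Δ j) d' hd'0 (min_le_left _ _)
        have hpredδ : pred (x j) (Δ j) < δ := by
          by_contra hcd
          push_neg at hcd
          have : η * δ ≤ a := le_trans (mul_le_mul_of_nonneg_left hcd hη0.le) hpred_le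
          linarith
        have hfd' : f (ε / 2) * d' / 2 ≤ pred (x j) (Δ j) := by
          rcases min_cases (f (ε / 2) * d' / 2) δ with ⟨hmin, _⟩ | ⟨hmin, _⟩
          · rw [hmin] at hpd'
            exact hpd'.trans hmono
          · rw [hmin] at hpd'
            linarith [hpd'.trans hmono]
        have hd'a : η * (f (ε / 2) * d' / 2) ≤ a :=
          le_trans (mul_le_mul_of_nonneg_left hfd' hη0.le) hpred_le
        have hd'lt : d' < Dst := by
          have h1 : η * f (ε / 2) * d' < η * f (ε / 2) * Dst := by linarith
          exact lt_of_mul_lt_mul_left h1 (by positivity)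
        have hΔjle : Δ j ≤ Dst := by
          by_contra hco
          push_neg at hco
          have : d' = Dst := min_eq_right hco.le
          linarith
        have hd'eq : d' = Δ j := min_eq_left hΔjle
        rcases hIV (x j) (hpos j) (Δ j) (hΔinv j).1 (hΔjle.trans hDstc) with hIVc | hIVδ
        · have hTC : |C (x (j + 1)) - C (x j)| ≤ L * Δ j := by rw [hxeq]; exact hIVc
          have h2a : η * f (ε / 2) * Δ j ≤ 2 * a := by
            rw [← hd'eq]; linarith [hd'a]
          have hLK : L * Δ j ≤ K * a := by
            rw [hK, div_mul_eq_mul_div, le_div_iff₀ (by positivity : (0:ℝ) < η * f (ε / 2))]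
            have := mul_le_mul_of_nonneg_left h2a hL.le
            nlinarith
          have habs := (abs_le.mp (hTC.trans hLK)).1
          have hJsplit : K * (J (x m) - J (x (j + 1))) =
              K * (J (x m) - J (x j)) + K * a := by rw [ha]; ring
          linarith
        · linarith [hIVδ]
      · obtain ⟨hxeq, _⟩ := (hstep j (hpos j)).2 hsj
        rw [hxeq]
        exact ih
  have hfin := hclaim n (le_trans (Nat.le_succ m) hnm)
  have hgap : J (x m) - J (x n) < ε'' := by
    have h1 : J (x m) ≤ J (x N) := hJanti hmN
    have h2 := hJinf_le n
    linarith
  have hKgap : K * (J (x m) - J (x n)) < ε / 2 := by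
    have := mul_lt_mul_of_pos_left hgap hK0
    linarith
  linarith
end

section
/- Let U be a real Hilbert space and G : U → (−∞,∞] proper, convex and lower semicontinuous. For r > 0 and v ∈ U let prox_{rG}(v) denote the unique minimizer over U of w ↦ G(w) + (1/(2r))‖w − v‖². Fix v, d ∈ U and define Φ : (0,∞) → [0,∞) by Φ(r) := ‖prox_{rG}(v + r·d) − v‖. Then Φ is nondecreasing and r ↦ Φ(r)/r is nonincreasing on (0,∞). -/
/-!
Write `p_r = prox_{rG}(v + r d)` and `a_r = p_r - v`. The optimality of `p_r` together with the
convexity of `G` makes `r⁻¹ (v + r d - p_r) = d - r⁻¹ a_r` a subgradient of `G` at `p_r`, and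
subgradients are monotone, so `⟪a_r - a_s, r⁻¹ a_r - s⁻¹ a_s⟫ ≤ 0`. By Cauchy–Schwarz the left side
dominates `(Φ(r) - Φ(s)) (Φ(r)/r - Φ(s)/s)`, hence `Φ` and `r ↦ Φ(r)/r` never increase together
nor decrease together; for `r ≤ s` and `Φ ≥ 0` this forces `Φ(r) ≤ Φ(s)` and `Φ(s)/s ≤ Φ(r)/r`.
-/

open scoped RealInnerProductSpace

open Set Filter Topology

theorem monotoneOn_and_antitoneOn_div_of_sub_mul_sub_div_nonpos {f : ℝ → ℝ}
    (hf : ∀ r, 0 < r → 0 ≤ f r)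
    (h : ∀ r s, 0 < r → 0 < s → (f r - f s) * (f r / r - f s / s) ≤ 0) :
    MonotoneOn f (Ioi 0) ∧ AntitoneOn (fun r => f r / r) (Ioi 0) := by
  constructor
  · intro r hr s hs hrs
    by_contra! hlt
    have hdiv : f s / s < f r / r :=
      (div_le_div_of_nonneg_left (hf s hs) hr hrs).trans_lt (div_lt_div_of_pos_right hlt hr)
    exact (h r s hr hs).not_gt (mul_pos (sub_pos.2 hlt) (sub_pos.2 hdiv))
  · intro r hr s hs hrs
    by_contra! hlt
    have hlt' : f r < f s := calc
      f r = r * (f r / r) := (mul_div_cancel₀ _ (ne_of_gt hr)).symm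
      _ < r * (f s / s) := mul_lt_mul_of_pos_left hlt hr
      _ ≤ s * (f s / s) := mul_le_mul_of_nonneg_right hrs (div_nonneg (hf s hs) (le_of_lt hs))
      _ = f s := mul_div_cancel₀ _ (ne_of_gt hs)
    exact (h r s hr hs).not_gt (mul_pos_of_neg_of_neg (sub_neg.2 hlt') (sub_neg.2 hlt))

section ProxPoint

variable {U : Type*} [NormedAddCommGroup U]

/-- `p = prox_{rG}(x)`. -/
def IsProxPoint (G : U → EReal) (r : ℝ) (x p : U) : Prop :=
  ∀ w, G p + ((‖p - x‖ ^ 2 / (2 * r) : ℝ) : EReal) ≤ G w + ((‖w - x‖ ^ 2 / (2 * r) : ℝ) : EReal)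

theorem IsProxPoint.ne_top {G : U → EReal} {r : ℝ} {x p : U} (hp : IsProxPoint G r x p) {w : U}
    (hw : G w ≠ ⊤) : G p ≠ ⊤ := by
  intro htop
  have h := hp w
  rw [htop, EReal.top_add_coe, top_le_iff] at h
  exact (EReal.add_lt_top hw (EReal.coe_ne_top _)).ne h

variable [InnerProductSpace ℝ U]

def ConvexEReal (G : U → EReal) : Prop :=
  ∀ v w : U, ∀ t : ℝ, 0 ≤ t → t ≤ 1 →
    G (t • v + (1 - t) • w) ≤ (t : EReal) * G v + ((1 - t : ℝ) : EReal) * G w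

theorem sub_norm_mul_sub_norm_le_inner (a b : U) {r s : ℝ} (hr : 0 ≤ r) (hs : 0 ≤ s) :
    (‖a‖ - ‖b‖) * (r * ‖a‖ - s * ‖b‖) ≤ ⟪a - b, r • a - s • b⟫ := by
  have hexpand : ⟪a - b, r • a - s • b⟫ = r * ‖a‖ ^ 2 + s * ‖b‖ ^ 2 - (r + s) * ⟪a, b⟫ := by
    simp only [inner_sub_left, inner_sub_right, real_inner_smul_right, real_inner_self_eq_norm_sq,
      real_inner_comm a b]
    ring
  rw [hexpand]
  nlinarith [mul_le_mul_of_nonneg_left (real_inner_le_norm a b) (add_nonneg hr hs)]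

theorem inner_sub_nonneg_of_subgradient {p q u u' : U} {gp gq : ℝ}
    (hu : gp + ⟪u, q - p⟫ ≤ gq) (hu' : gq + ⟪u', p - q⟫ ≤ gp) :
    0 ≤ ⟪u - u', p - q⟫ := by
  have : ⟪u, q - p⟫ = -⟪u, p - q⟫ := by rw [← inner_neg_right, neg_sub]
  rw [inner_sub_left]
  linarith

namespace IsProxPoint

variable {G : U → EReal}

theorem subgradient (hGconv : ConvexEReal G) {r : ℝ} (hr : 0 < r) {x p : U}
    (hp : IsProxPoint G r x p) {w : U} {gp gw : ℝ} (hGp : G p = gp) (hGw : G w = gw) :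
    gp + ⟪r⁻¹ • (x - p), w - p⟫ ≤ gw := by
  set k := ‖w - p‖ ^ 2 / (2 * r)
  -- compare `p` with `p + t (w - p)` and let `t → 0⁺`
  have hsmall : ∀ t ∈ Ioc (0 : ℝ) 1, gp + ⟪r⁻¹ • (x - p), w - p⟫ ≤ gw + t * k := by
    rintro t ⟨ht0, ht1⟩
    have hmin := (hp (t • w + (1 - t) • p)).trans (add_le_add (hGconv w p t ht0.le ht1) le_rfl)
    rw [hGp, hGw, show t • w + (1 - t) • p - x = (p - x) + t • (w - p) by module] at hmin
    have hreal : gp + ‖p - x‖ ^ 2 / (2 * r) ≤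
        t * gw + (1 - t) * gp + ‖(p - x) + t • (w - p)‖ ^ 2 / (2 * r) := by
      exact_mod_cast hmin
    rw [norm_add_sq_real, norm_smul, Real.norm_eq_abs, abs_of_pos ht0, real_inner_smul_right]
      at hreal
    have hinner : ⟪r⁻¹ • (x - p), w - p⟫ = -(⟪p - x, w - p⟫ / r) := by
      rw [real_inner_smul_left, ← neg_sub p x, inner_neg_left]; ring
    rw [hinner]
    have : t * (gp - ⟪p - x, w - p⟫ / r) ≤ t * (gw + t * k) := by
      simp only [k] at *
      field_simp at hreal ⊢
      nlinarith
    linarith [le_of_mul_le_mul_left this ht0]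
  have hlim : Tendsto (fun t : ℝ => gw + t * k) (𝓝[>] 0) (𝓝 gw) := by
    have : Tendsto (fun t : ℝ => gw + t * k) (𝓝 0) (𝓝 (gw + 0 * k)) :=
      tendsto_const_nhds.add (tendsto_id.mul_const k)
    simpa using this.mono_left nhdsWithin_le_nhds
  exact ge_of_tendsto hlim (eventually_of_mem (Ioc_mem_nhdsGT one_pos) hsmall)

theorem inner_sub_smul_sub_nonpos (hGconv : ConvexEReal G) {r s : ℝ} (hr : 0 < r) (hs : 0 < s)
    {v d p q : U}
    (hp : IsProxPoint G r (v + r • d) p) (hq : IsProxPoint G s (v + s • d) q) {gp gq : ℝ}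
    (hGp : G p = gp) (hGq : G q = gq) :
    ⟪(p - v) - (q - v), r⁻¹ • (p - v) - s⁻¹ • (q - v)⟫ ≤ 0 := by
  have hmono := inner_sub_nonneg_of_subgradient (hp.subgradient hGconv hr hGp hGq)
    (hq.subgradient hGconv hs hGq hGp)
  have hu : r⁻¹ • (v + r • d - p) - s⁻¹ • (v + s • d - q) =
      -(r⁻¹ • (p - v) - s⁻¹ • (q - v)) := by
    simp only [smul_sub, smul_add, smul_smul, inv_mul_cancel₀ hr.ne', inv_mul_cancel₀ hs.ne',
      one_smul]
    abel
  rw [hu, inner_neg_left, real_inner_comm, show p - q = (p - v) - (q - v) by abel] at hmono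
  linarith

end IsProxPoint

end ProxPoint

theorem prox_parameter_monotonicity_general
    {U : Type*} [NormedAddCommGroup U] [InnerProductSpace ℝ U]
    (G : U → EReal)
    -- `G` is proper
    (hGbot : ∀ v : U, G v ≠ ⊥) (hGtop : ∃ v : U, G v ≠ ⊤)
    -- `G` is convex
    (hGconv : ∀ v w : U, ∀ t : ℝ, 0 ≤ t → t ≤ 1 →
      G (t • v + (1 - t) • w) ≤ (t : EReal) * G v + ((1 - t : ℝ) : EReal) * G w)
    -- `prox r v` is the (unique) minimizer of `w ↦ G w + ‖w - v‖² / (2 r)`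
    (prox : ℝ → U → U)
    (hprox : ∀ r : ℝ, 0 < r → ∀ v w : U,
      G (prox r v) + ((‖prox r v - v‖ ^ 2 / (2 * r) : ℝ) : EReal) ≤
        G w + ((‖w - v‖ ^ 2 / (2 * r) : ℝ) : EReal))
    (v d : U) :
    MonotoneOn (fun r : ℝ => ‖prox r (v + r • d) - v‖) (Set.Ioi (0 : ℝ)) ∧
    AntitoneOn (fun r : ℝ => ‖prox r (v + r • d) - v‖ / r) (Set.Ioi (0 : ℝ)) := by
  obtain ⟨w₀, hw₀⟩ := hGtop
  have hfinite : ∀ r, 0 < r → G (prox r (v + r • d)) = (G (prox r (v + r • d))).toReal :=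
    fun r hr => (EReal.coe_toReal (IsProxPoint.ne_top (hprox r hr _) hw₀) (hGbot _)).symm
  refine monotoneOn_and_antitoneOn_div_of_sub_mul_sub_div_nonpos (fun r _ => norm_nonneg _) ?_
  intro r s hr hs
  set a := prox r (v + r • d) - v
  set b := prox s (v + s • d) - v
  calc (‖a‖ - ‖b‖) * (‖a‖ / r - ‖b‖ / s) = (‖a‖ - ‖b‖) * (r⁻¹ * ‖a‖ - s⁻¹ * ‖b‖) := by
        rw [div_eq_inv_mul, div_eq_inv_mul]
    _ ≤ ⟪a - b, r⁻¹ • a - s⁻¹ • b⟫ :=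
        sub_norm_mul_sub_norm_le_inner a b (inv_nonneg.2 hr.le) (inv_nonneg.2 hs.le)
    _ ≤ 0 := IsProxPoint.inner_sub_smul_sub_nonpos hGconv hr hs (hprox r hr _) (hprox s hs _)
        (hfinite r hr) (hfinite s hs)

/-- The map `r ↦ ‖prox_{rG}(v + r d) - v‖` is nondecreasing and
`r ↦ ‖prox_{rG}(v + r d) - v‖ / r` is nonincreasing on `(0, ∞)`. -/
theorem prox_parameter_monotonicity
    {U : Type*} [NormedAddCommGroup U] [InnerProductSpace ℝ U] [CompleteSpace U]
    (G : U → EReal)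
    -- `G` is proper
    (hGbot : ∀ v : U, G v ≠ ⊥) (hGtop : ∃ v : U, G v ≠ ⊤)
    -- `G` is convex
    (hGconv : ∀ v w : U, ∀ t : ℝ, 0 ≤ t → t ≤ 1 →
      G (t • v + (1 - t) • w) ≤ (t : EReal) * G v + ((1 - t : ℝ) : EReal) * G w)
    -- `G` is lower semicontinuous
    (hGlsc : LowerSemicontinuous G)
    -- `prox r v` is the (unique) minimizer of `w ↦ G w + ‖w - v‖² / (2 r)`
    (prox : ℝ → U → U)
    (hprox : ∀ r : ℝ, 0 < r → ∀ v w : U,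
      G (prox r v) + ((‖prox r v - v‖ ^ 2 / (2 * r) : ℝ) : EReal) ≤
        G w + ((‖w - v‖ ^ 2 / (2 * r) : ℝ) : EReal))
    (v d : U) :
    MonotoneOn (fun r : ℝ => ‖prox r (v + r • d) - v‖) (Set.Ioi (0 : ℝ)) ∧
    AntitoneOn (fun r : ℝ => ‖prox r (v + r • d) - v‖ / r) (Set.Ioi (0 : ℝ)) :=
  prox_parameter_monotonicity_general G hGbot hGtop hGconv prox hprox v d
end

section
/- Let U be a real Hilbert space, G : U → (−∞,∞] proper, convex and lower semicontinuous, and F : U → ℝ Fréchet differentiable. Fix r > 0 and define C(v) := (1/(2r²))‖v − prox_{rG}(v − r∇F(v))‖². For v ∈ dom(G) and Δ > 0 let v̂ := T(v,Δ) := prox_{ΔG}(v − Δ∇F(v)) and define the predicted reduction pred(v,Δ) := ⟨∇F(v), v − v̂⟩ + G(v) − G(v̂) − (1/(2Δ))‖v̂ − v‖². Then for every v ∈ dom(G) and every Δ ∈ (0, r] one has pred(v,Δ) ≥ C(v)·Δ. -/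
/-!
Let `g = ∇F(v)`, `N = ‖prox_{rG}(v - r g) - v‖²` and `t = Δ / r ∈ (0, 1]`. The first-order
optimality condition of `p = prox_{rG}(v - r g)`, tested at `v`, reads
`⟪g, p - v⟫ + G p - G v ≤ -N / r`. Since `T(v,Δ)` minimizes the model `m_{v,Δ}` (which differs
from the objective of `prox_{ΔG}(v - Δ g)` by a constant), convexity of `G` along the segment
from `v` to `p` gives
`pred(v,Δ) = -m_{v,Δ}(T(v,Δ)) ≥ -m_{v,Δ}(v + t (p - v)) ≥ (t / r - t² / (2Δ)) N = Δ N / (2 r²)`.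
-/

open scoped RealInnerProductSpace
open Topology

section EReal

variable {α : Type*} {G : α → EReal}

theorem ne_top_of_forall_add_coe_le {φ : α → ℝ} {p w₀ : α}
    (hmin : ∀ w, G p + (φ p : EReal) ≤ G w + (φ w : EReal)) (hw₀ : G w₀ ≠ ⊤) : G p ≠ ⊤ := by
  intro hp
  have h := hmin w₀
  rw [hp, EReal.top_add_of_ne_bot (EReal.coe_ne_bot _), top_le_iff] at h
  exact EReal.add_ne_top hw₀ (EReal.coe_ne_top _) h

theorem isMinOn_toReal_add_of_forall_add_coe_le (hGbot : ∀ v, G v ≠ ⊥) {φ : α → ℝ} {p : α}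
    (hmin : ∀ w, G p + (φ p : EReal) ≤ G w + (φ w : EReal)) (hp : G p ≠ ⊤) :
    IsMinOn (fun w => (G w).toReal + φ w) {x | G x ≠ ⊤} p := by
  refine isMinOn_iff.mpr fun w hw => ?_
  have h := hmin w
  rwa [← EReal.coe_toReal hp (hGbot p), ← EReal.coe_toReal hw (hGbot w), ← EReal.coe_add,
    ← EReal.coe_add, EReal.coe_le_coe_iff] at h

theorem convexOn_toReal_on_ne_top {E : Type*} [AddCommGroup E] [Module ℝ E] {G : E → EReal}
    (hGbot : ∀ v, G v ≠ ⊥)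
    (hGconv : ∀ v w : E, ∀ t : ℝ, 0 ≤ t → t ≤ 1 →
      G (t • v + (1 - t) • w) ≤ (t : EReal) * G v + ((1 - t : ℝ) : EReal) * G w) :
    ConvexOn ℝ {x | G x ≠ ⊤} (fun x => (G x).toReal) := by
  have hcomb : ∀ ⦃x⦄, G x ≠ ⊤ → ∀ ⦃y⦄, G y ≠ ⊤ → ∀ ⦃a b : ℝ⦄, 0 ≤ a → 0 ≤ b → a + b = 1 →
      G (a • x + b • y) ≤ ((a * (G x).toReal + b * (G y).toReal : ℝ) : EReal) := by
    intro x hx y hy a b ha hb hab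
    obtain rfl : b = 1 - a := by linarith
    have h := hGconv x y a ha (by linarith)
    rwa [← EReal.coe_toReal hx (hGbot x), ← EReal.coe_toReal hy (hGbot y), ← EReal.coe_mul,
      ← EReal.coe_mul, ← EReal.coe_add] at h
  refine ⟨fun x hx y hy a b ha hb hab => ?_, fun x hx y hy a b ha hb hab => ?_⟩
  · exact ne_top_of_le_ne_top (EReal.coe_ne_top _) (hcomb hx hy ha hb hab)
  · have h := EReal.toReal_le_toReal (hcomb hx hy ha hb hab) (hGbot _) (EReal.coe_ne_top _)
    rwa [EReal.toReal_coe] at h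

end EReal

section InnerProductSpace

variable {U : Type*} [NormedAddCommGroup U] [InnerProductSpace ℝ U]

theorem ConvexOn.inner_sub_le_of_isMinOn_add_norm_sq {s : Set U} {f : U → ℝ}
    (hf : ConvexOn ℝ s f) {ρ : ℝ} (hρ : 0 < ρ) {u p w : U} (hp : p ∈ s) (hw : w ∈ s)
    (hmin : IsMinOn (fun x => f x + ‖x - u‖ ^ 2 / (2 * ρ)) s p) :
    ⟪u - p, w - p⟫ ≤ ρ * (f w - f p) := by
  have hsmall : ∀ τ : ℝ, 0 < τ → τ ≤ 1 →
      ⟪u - p, w - p⟫ ≤ ρ * (f w - f p) + τ / 2 * ‖w - p‖ ^ 2 := by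
    intro τ hτ0 hτ1
    have hconv := hf.2 hp hw (by linarith : 0 ≤ 1 - τ) hτ0.le (by ring)
    have hle := isMinOn_iff.mp hmin _ (hf.1 hp hw (by linarith : 0 ≤ 1 - τ) hτ0.le (by ring))
    have hnorm : ‖(1 - τ) • p + τ • w - u‖ ^ 2
        = ‖p - u‖ ^ 2 - 2 * τ * ⟪u - p, w - p⟫ + τ ^ 2 * ‖w - p‖ ^ 2 := by
      rw [show (1 - τ) • p + τ • w - u = (p - u) + τ • (w - p) by module, norm_add_sq_real,
        inner_smul_right, norm_smul, mul_pow, Real.norm_eq_abs, sq_abs,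
        ← neg_sub u p, inner_neg_left]
      ring
    rw [hnorm, ← sub_nonneg] at hle
    rw [smul_eq_mul, smul_eq_mul] at hconv
    have hscaled : 0 ≤ 2 * ρ * (f ((1 - τ) • p + τ • w) - f p)
        + τ * (τ * ‖w - p‖ ^ 2 - 2 * ⟪u - p, w - p⟫) := by
      refine (mul_nonneg hle (by linarith : (0 : ℝ) ≤ 2 * ρ)).trans_eq ?_
      field_simp
      ring
    have hτ : 0 ≤ τ * (2 * ρ * (f w - f p) + τ * ‖w - p‖ ^ 2 - 2 * ⟪u - p, w - p⟫) := by
      linarith [mul_le_mul_of_nonneg_left hconv (by linarith : (0 : ℝ) ≤ 2 * ρ)]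
    linarith [(mul_nonneg_iff_of_pos_left hτ0).mp hτ]
  refine ge_of_tendsto (f := fun τ => ρ * (f w - f p) + τ / 2 * ‖w - p‖ ^ 2)
    (x := 𝓝[>] 0) ?_ ?_
  · exact tendsto_nhdsWithin_of_tendsto_nhds
      ((by fun_prop : Continuous fun τ : ℝ => ρ * (f w - f p) + τ / 2 * ‖w - p‖ ^ 2).tendsto' 0 _
        (by simp))
  · filter_upwards [Ioo_mem_nhdsGT one_pos] with τ hτ using hsmall τ hτ.1 hτ.2.le

section Model

variable (f : U → ℝ) (g v : U) (Δ : ℝ)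

/-- The proximal gradient model `m_{v,Δ}` with `g = ∇F(v)`. -/
noncomputable def proxGradModel (w : U) : ℝ :=
  ⟪g, w - v⟫ + f w - f v + ‖w - v‖ ^ 2 / (2 * Δ)

variable {f g v Δ}

theorem proxGradModel_eq (hΔ : Δ ≠ 0) (w : U) :
    proxGradModel f g v Δ w
      = f w + ‖w - (v - Δ • g)‖ ^ 2 / (2 * Δ) - (f v + Δ / 2 * ‖g‖ ^ 2) := by
  rw [proxGradModel, show w - (v - Δ • g) = (w - v) + Δ • g by abel, norm_add_sq_real,
    inner_smul_right, norm_smul, mul_pow, Real.norm_eq_abs, sq_abs, real_inner_comm]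
  field_simp
  ring

theorem isMinOn_proxGradModel {s : Set U} {p : U} (hΔ : Δ ≠ 0)
    (hmin : IsMinOn (fun w => f w + ‖w - (v - Δ • g)‖ ^ 2 / (2 * Δ)) s p) :
    IsMinOn (proxGradModel f g v Δ) s p := by
  refine isMinOn_iff.mpr fun w hw => ?_
  rw [proxGradModel_eq hΔ, proxGradModel_eq hΔ]
  linarith [isMinOn_iff.mp hmin w hw]

/-- `hopt` is the optimality condition of `p = prox_{rG}(v - r g)` tested at `v`. -/
theorem proxGradModel_segment_le {s : Set U} (hf : ConvexOn ℝ s f) {p : U} {r t : ℝ}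
    (hv : v ∈ s) (hp : p ∈ s) (hr : 0 < r) (ht0 : 0 ≤ t) (ht1 : t ≤ 1)
    (hopt : ⟪v - r • g - p, v - p⟫ ≤ r * (f v - f p)) :
    proxGradModel f g v Δ (t • p + (1 - t) • v) ≤ (t ^ 2 / (2 * Δ) - t / r) * ‖p - v‖ ^ 2 := by
  have hconv : f (t • p + (1 - t) • v) ≤ t * f p + (1 - t) * f v :=
    hf.2 hp hv ht0 (by linarith) (by ring)
  have hdesc : ⟪g, p - v⟫ + f p - f v ≤ -(‖p - v‖ ^ 2 / r) := by
    have h : ⟪v - r • g - p, v - p⟫ = ‖p - v‖ ^ 2 + r * ⟪g, p - v⟫ := by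
      rw [show v - r • g - p = -(p - v) - r • g by abel, show v - p = -(p - v) by abel,
        inner_sub_left, inner_neg_neg, real_inner_self_eq_norm_sq, inner_smul_left,
        inner_neg_right]
      simp only [conj_trivial]
      ring
    rw [h] at hopt
    rw [le_neg, div_le_iff₀ hr]
    linarith
  have hseg : t • p + (1 - t) • v - v = t • (p - v) := by module
  rw [proxGradModel, hseg, inner_smul_right, norm_smul, mul_pow, Real.norm_eq_abs, sq_abs]
  have hrhs : (t ^ 2 / (2 * Δ) - t / r) * ‖p - v‖ ^ 2
      = t ^ 2 * ‖p - v‖ ^ 2 / (2 * Δ) + t * -(‖p - v‖ ^ 2 / r) := by ring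
  rw [hrhs]
  linarith [mul_le_mul_of_nonneg_left hdesc ht0]

end Model

end InnerProductSpace

theorem prox_grad_sufficient_decrease_general
    {U : Type*} [NormedAddCommGroup U] [InnerProductSpace ℝ U]
    (G : U → EReal)
    -- `G` is proper
    (hGbot : ∀ v : U, G v ≠ ⊥)
    -- `G` is convex
    (hGconv : ∀ v w : U, ∀ t : ℝ, 0 ≤ t → t ≤ 1 →
      G (t • v + (1 - t) • w) ≤ (t : EReal) * G v + ((1 - t : ℝ) : EReal) * G w)
    -- `prox r v` is the (unique) minimizer of `w ↦ G w + ‖w - v‖² / (2 r)`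
    (prox : ℝ → U → U)
    (hprox : ∀ r : ℝ, 0 < r → ∀ v w : U,
      G (prox r v) + ((‖prox r v - v‖ ^ 2 / (2 * r) : ℝ) : EReal) ≤
        G w + ((‖w - v‖ ^ 2 / (2 * r) : ℝ) : EReal))
    (gradF : U → U)
    (r : ℝ) (hr : 0 < r) :
    ∀ v : U, G v ≠ ⊤ → ∀ Δ : ℝ, 0 < Δ → Δ ≤ r →
      1 / (2 * r ^ 2) * ‖v - prox r (v - r • gradF v)‖ ^ 2 * Δ ≤
        ⟪gradF v, v - prox Δ (v - Δ • gradF v)⟫ +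
          (G v).toReal - (G (prox Δ (v - Δ • gradF v))).toReal -
          1 / (2 * Δ) * ‖prox Δ (v - Δ • gradF v) - v‖ ^ 2 := by
  intro v hv Δ hΔ hΔr
  set f := fun x => (G x).toReal
  set g := gradF v
  have hf : ConvexOn ℝ {x | G x ≠ ⊤} f := convexOn_toReal_on_ne_top hGbot hGconv
  have hproxMin : ∀ ρ, 0 < ρ → ∀ u, G (prox ρ u) ≠ ⊤ ∧
      IsMinOn (fun w => f w + ‖w - u‖ ^ 2 / (2 * ρ)) {x | G x ≠ ⊤} (prox ρ u) := fun ρ hρ u =>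
    have hne := ne_top_of_forall_add_coe_le (φ := fun w => ‖w - u‖ ^ 2 / (2 * ρ)) (hprox ρ hρ u) hv
    ⟨hne, isMinOn_toReal_add_of_forall_add_coe_le hGbot (hprox ρ hρ u) hne⟩
  set p := prox r (v - r • g)
  set T := prox Δ (v - Δ • g)
  obtain ⟨hp, hpMin⟩ := hproxMin r hr (v - r • g)
  obtain ⟨hT, hTMin⟩ := hproxMin Δ hΔ (v - Δ • g)
  have ht0 : 0 ≤ Δ / r := (div_pos hΔ hr).le
  have ht1 : Δ / r ≤ 1 := (div_le_one hr).mpr hΔr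
  have hopt : ⟪v - r • g - p, v - p⟫ ≤ r * (f v - f p) :=
    hf.inner_sub_le_of_isMinOn_add_norm_sq hr hp hv hpMin
  have hTle : proxGradModel f g v Δ T ≤ proxGradModel f g v Δ ((Δ / r) • p + (1 - Δ / r) • v) :=
    isMinOn_iff.mp (isMinOn_proxGradModel hΔ.ne' hTMin) _
      (hf.1 hp hv ht0 (by linarith) (by ring))
  have hseg := proxGradModel_segment_le (Δ := Δ) hf hv hp hr ht0 ht1 hopt
  have hpred : ⟪g, v - T⟫ + f v - f T - 1 / (2 * Δ) * ‖T - v‖ ^ 2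
      = -proxGradModel f g v Δ T := by
    rw [proxGradModel, ← neg_sub T v, inner_neg_right]
    ring
  have hconst : 1 / (2 * r ^ 2) * Δ = -((Δ / r) ^ 2 / (2 * Δ) - Δ / r / r) := by
    field_simp
    ring
  rw [hpred, norm_sub_rev, mul_right_comm, hconst]
  linarith

/-- Sufficient decrease for the proximal gradient model
(Lemma 3.8 / `lem:OC_conv_predictability`): `pred(v,Δ) ≥ C(v)·Δ` for `Δ ∈ (0, r]`. -/
theorem prox_grad_sufficient_decrease
    {U : Type*} [NormedAddCommGroup U] [InnerProductSpace ℝ U] [CompleteSpace U]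
    (G : U → EReal)
    -- `G` is proper
    (hGbot : ∀ v : U, G v ≠ ⊥) (hGtop : ∃ v : U, G v ≠ ⊤)
    -- `G` is convex
    (hGconv : ∀ v w : U, ∀ t : ℝ, 0 ≤ t → t ≤ 1 →
      G (t • v + (1 - t) • w) ≤ (t : EReal) * G v + ((1 - t : ℝ) : EReal) * G w)
    -- `G` is lower semicontinuous
    (hGlsc : LowerSemicontinuous G)
    -- `prox r v` is the (unique) minimizer of `w ↦ G w + ‖w - v‖² / (2 r)`
    (prox : ℝ → U → U)
    (hprox : ∀ r : ℝ, 0 < r → ∀ v w : U,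
      G (prox r v) + ((‖prox r v - v‖ ^ 2 / (2 * r) : ℝ) : EReal) ≤
        G w + ((‖w - v‖ ^ 2 / (2 * r) : ℝ) : EReal))
    -- `F` is Fréchet differentiable with gradient `gradF`
    (F : U → ℝ) (gradF : U → U) (hF : ∀ v : U, HasGradientAt F (gradF v) v)
    (r : ℝ) (hr : 0 < r) :
    ∀ v : U, G v ≠ ⊤ → ∀ Δ : ℝ, 0 < Δ → Δ ≤ r →
      1 / (2 * r ^ 2) * ‖v - prox r (v - r • gradF v)‖ ^ 2 * Δ ≤
        ⟪gradF v, v - prox Δ (v - Δ • gradF v)⟫ +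
          (G v).toReal - (G (prox Δ (v - Δ • gradF v))).toReal -
          1 / (2 * Δ) * ‖prox Δ (v - Δ • gradF v) - v‖ ^ 2 :=
  prox_grad_sufficient_decrease_general G hGbot hGconv prox hprox gradF r hr
end

section
/- Let U be a real Hilbert space, G : U → (−∞,∞] proper, convex and lower semicontinuous, and F : U → ℝ Fréchet differentiable with ∇F Lipschitz continuous with constant L_{∇F} > 0. For v ∈ dom(G), Δ > 0, let v̂ := T(v,Δ) := prox_{ΔG}(v − Δ∇F(v)), pred(v,Δ) := ⟨∇F(v), v − v̂⟩ + G(v) − G(v̂) − (1/(2Δ))‖v̂ − v‖², and ared(v,Δ) := (F+G)(v) − (F+G)(v̂). Then for every η ∈ (0,1], every v ∈ dom(G) and every Δ ∈ (0, 1/L_{∇F}]: ared(v,Δ) ≥ η·pred(v,Δ); in particular every trust-region iteration with sufficiently small radius is successful. -/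
/-!
Testing the prox optimality of `v̂` against the competitor `v` gives `pred(v, Δ) ≥ 0`. The descent
lemma `F v̂ ≤ F v + ⟪∇F v, v̂ - v⟫ + (L/2) ‖v̂ - v‖²`, together with `L ≤ 1/Δ`, gives
`ared(v, Δ) ≥ pred(v, Δ)`. Hence `ared ≥ pred ≥ η pred` for `η ≤ 1`.
-/

open scoped RealInnerProductSpace

theorem EReal.toReal_add_le_toReal_add_of_add_coe_le {a b : EReal} {x y : ℝ}
    (h : a + x ≤ b + y) (ha : a ≠ ⊥) (hb : b ≠ ⊥) (hb' : b ≠ ⊤) :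
    a.toReal + x ≤ b.toReal + y := by
  lift b to ℝ using ⟨hb', hb⟩
  have ha' : a ≠ ⊤ := by
    rintro rfl
    simp [← EReal.coe_add] at h
  lift a to ℝ using ⟨ha', ha⟩
  exact_mod_cast h

section ProxGradient

variable {U : Type*} [NormedAddCommGroup U] [InnerProductSpace ℝ U]

theorem norm_sub_sub_smul_sq_div (u v g : U) {r : ℝ} (hr : r ≠ 0) :
    ‖u - (v - r • g)‖ ^ 2 / (2 * r) = ‖u - v‖ ^ 2 / (2 * r) + ⟪g, u - v⟫ + r / 2 * ‖g‖ ^ 2 := by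
  rw [show u - (v - r • g) = (u - v) + r • g by abel, norm_add_sq_real, real_inner_smul_right,
    norm_smul, Real.norm_eq_abs, mul_pow, sq_abs, real_inner_comm]
  field_simp

/-- `pred(v, Δ)` at the trial point `u = T(v, Δ)`, with `g = ∇F(v)`. -/
noncomputable def predictedReduction (G : U → EReal) (g v u : U) (Δ : ℝ) : ℝ :=
  ⟪g, v - u⟫ + (G v).toReal - (G u).toReal - 1 / (2 * Δ) * ‖u - v‖ ^ 2

/-- `ared(v, Δ)` at the trial point `u = T(v, Δ)`. -/
noncomputable def actualReduction (F : U → ℝ) (G : U → EReal) (v u : U) : ℝ :=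
  (F v + (G v).toReal) - (F u + (G u).toReal)

theorem predictedReduction_nonneg {G : U → EReal} {g v u : U} {Δ : ℝ} (hΔ : Δ ≠ 0)
    (hu : G u + ((‖u - (v - Δ • g)‖ ^ 2 / (2 * Δ) : ℝ) : EReal) ≤
      G v + ((‖v - (v - Δ • g)‖ ^ 2 / (2 * Δ) : ℝ) : EReal))
    (hGu : G u ≠ ⊥) (hGv : G v ≠ ⊥) (hGv' : G v ≠ ⊤) :
    0 ≤ predictedReduction G g v u Δ := by
  have h := EReal.toReal_add_le_toReal_add_of_add_coe_le hu hGu hGv hGv'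
  rw [norm_sub_sub_smul_sq_div _ _ _ hΔ, norm_sub_sub_smul_sq_div _ _ _ hΔ, sub_self,
    inner_zero_right, norm_zero, zero_pow two_ne_zero, zero_div, zero_add, zero_add] at h
  have hinner : ⟪g, v - u⟫ = -⟪g, u - v⟫ := by rw [← inner_neg_right, neg_sub]
  rw [predictedReduction, hinner, one_div_mul_eq_div]
  linarith

section Descent

variable [CompleteSpace U]

theorem HasGradientAt.hasDerivAt_comp_add_smul {F : U → ℝ} {g v d : U} {t : ℝ}
    (hF : HasGradientAt F g (v + t • d)) :
    HasDerivAt (fun s : ℝ => F (v + s • d)) ⟪g, d⟫ t := by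
  have hline : HasDerivAt (fun s : ℝ => v + s • d) d t := by
    simpa using ((hasDerivAt_id t).smul_const d).const_add v
  simpa [Function.comp_def] using hF.hasFDerivAt.comp_hasDerivAt t hline

theorem le_add_inner_add_of_lipschitz_gradient {F : U → ℝ} {gradF : U → U}
    (hF : ∀ v, HasGradientAt F (gradF v) v) {L : ℝ}
    (hlip : ∀ v w, ‖gradF v - gradF w‖ ≤ L * ‖v - w‖) (v w : U) :
    F w ≤ F v + ⟪gradF v, w - v⟫ + L / 2 * ‖w - v‖ ^ 2 := by
  set d := w - v
  -- The claim is `φ 1 ≤ φ 0`, and `φ' ≤ 0` on `(0, 1)` by Cauchy–Schwarz and the Lipschitz bound.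
  set φ : ℝ → ℝ := fun t => F (v + t • d) - t * ⟪gradF v, d⟫ - L / 2 * t ^ 2 * ‖d‖ ^ 2
  have hφ : ∀ t : ℝ, HasDerivAt φ
      (⟪gradF (v + t • d) - gradF v, d⟫ - L * t * ‖d‖ ^ 2) t := by
    intro t
    have h := (((hF (v + t • d)).hasDerivAt_comp_add_smul).sub
      ((hasDerivAt_id t).mul_const ⟪gradF v, d⟫)).sub
      (((hasDerivAt_pow 2 t).const_mul (L / 2)).mul_const (‖d‖ ^ 2))
    refine h.congr_deriv ?_
    simp only [inner_sub_left, one_mul, Nat.cast_ofNat, Nat.add_one_sub_one, pow_one]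
    ring
  have hanti : AntitoneOn φ (Set.Icc 0 1) := by
    refine antitoneOn_of_deriv_nonpos (convex_Icc 0 1)
      (fun t _ => (hφ t).continuousAt.continuousWithinAt)
      (fun t _ => (hφ t).differentiableAt.differentiableWithinAt) fun t ht => ?_
    rw [interior_Icc] at ht
    rw [(hφ t).deriv, sub_nonpos]
    calc ⟪gradF (v + t • d) - gradF v, d⟫ ≤ ‖gradF (v + t • d) - gradF v‖ * ‖d‖ :=
          real_inner_le_norm _ _
      _ ≤ L * ‖(v + t • d) - v‖ * ‖d‖ := by gcongr; exact hlip _ _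
      _ = L * t * ‖d‖ ^ 2 := by
          rw [add_sub_cancel_left, norm_smul, Real.norm_eq_abs, abs_of_pos ht.1]; ring
  have h01 := hanti (Set.left_mem_Icc.2 zero_le_one) (Set.right_mem_Icc.2 zero_le_one)
    zero_le_one
  simp only [φ, one_smul, zero_smul, add_zero, zero_mul, one_mul, one_pow, sub_zero,
    mul_zero, zero_pow two_ne_zero, mul_one, d, add_sub_cancel] at h01
  linarith

theorem predictedReduction_le_actualReduction {F : U → ℝ} {gradF : U → U}
    (hF : ∀ v, HasGradientAt F (gradF v) v) {L : ℝ}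
    (hlip : ∀ v w, ‖gradF v - gradF w‖ ≤ L * ‖v - w‖) (G : U → EReal) (v u : U) {Δ : ℝ}
    (hL : L ≤ 1 / Δ) :
    predictedReduction G (gradF v) v u Δ ≤ actualReduction F G v u := by
  have hdesc := le_add_inner_add_of_lipschitz_gradient hF hlip v u
  have hquad : L / 2 * ‖u - v‖ ^ 2 ≤ 1 / (2 * Δ) * ‖u - v‖ ^ 2 := by
    calc L / 2 * ‖u - v‖ ^ 2 ≤ 1 / Δ / 2 * ‖u - v‖ ^ 2 := by gcongr
      _ = 1 / (2 * Δ) * ‖u - v‖ ^ 2 := by ring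
  have hinner : ⟪gradF v, v - u⟫ = -⟪gradF v, u - v⟫ := by rw [← inner_neg_right, neg_sub]
  rw [predictedReduction, actualReduction, hinner]
  linarith

end Descent

end ProxGradient

theorem prox_grad_small_radius_successful_general
    {U : Type*} [NormedAddCommGroup U] [InnerProductSpace ℝ U] [CompleteSpace U]
    (G : U → EReal)
    -- `G` is proper
    (hGbot : ∀ v : U, G v ≠ ⊥)
    -- `F` is Fréchet differentiable with gradient `gradF`
    (F : U → ℝ) (gradF : U → U) (hF : ∀ v : U, HasGradientAt F (gradF v) v)
    -- `∇F` is Lipschitz with constant `LgradF > 0`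
    (LgradF : ℝ)
    (hgradlip : ∀ v w : U, ‖gradF v - gradF w‖ ≤ LgradF * ‖v - w‖)
    -- `prox r v` is the (unique) minimizer of `w ↦ G w + ‖w - v‖² / (2 r)`
    (prox : ℝ → U → U)
    (hprox : ∀ r : ℝ, 0 < r → ∀ v w : U,
      G (prox r v) + ((‖prox r v - v‖ ^ 2 / (2 * r) : ℝ) : EReal) ≤
        G w + ((‖w - v‖ ^ 2 / (2 * r) : ℝ) : EReal)) :
    ∀ η : ℝ, 0 < η → η ≤ 1 → ∀ v : U, G v ≠ ⊤ → ∀ Δ : ℝ, 0 < Δ → Δ ≤ 1 / LgradF →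
      η * (⟪gradF v, v - prox Δ (v - Δ • gradF v)⟫ +
          (G v).toReal - (G (prox Δ (v - Δ • gradF v))).toReal -
          1 / (2 * Δ) * ‖prox Δ (v - Δ • gradF v) - v‖ ^ 2) ≤
        (F v + (G v).toReal) -
          (F (prox Δ (v - Δ • gradF v)) + (G (prox Δ (v - Δ • gradF v))).toReal) := by
  intro η _ hη1 v hv Δ hΔ hΔL
  have hL : LgradF ≤ 1 / Δ := (le_one_div (one_div_pos.mp (hΔ.trans_le hΔL)) hΔ).mpr hΔL
  have hpred := predictedReduction_nonneg (g := gradF v) hΔ.ne' (hprox Δ hΔ _ v) (hGbot _)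
    (hGbot v) hv
  exact (mul_le_of_le_one_left hpred hη1).trans
    (predictedReduction_le_actualReduction hF hgradlip G v _ hL)

/-- Remark 3.10 / `rem:accuracy`: every proximal gradient trust-region iteration with
radius `Δ ≤ 1/L_{∇F}` is successful, i.e. `ared(v,Δ) ≥ η pred(v,Δ)`. -/
theorem prox_grad_small_radius_successful
    {U : Type*} [NormedAddCommGroup U] [InnerProductSpace ℝ U] [CompleteSpace U]
    (G : U → EReal)
    -- `G` is proper
    (hGbot : ∀ v : U, G v ≠ ⊥) (hGtop : ∃ v : U, G v ≠ ⊤)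
    -- `G` is convex
    (hGconv : ∀ v w : U, ∀ t : ℝ, 0 ≤ t → t ≤ 1 →
      G (t • v + (1 - t) • w) ≤ (t : EReal) * G v + ((1 - t : ℝ) : EReal) * G w)
    -- `G` is lower semicontinuous
    (hGlsc : LowerSemicontinuous G)
    -- `F` is Fréchet differentiable with gradient `gradF`
    (F : U → ℝ) (gradF : U → U) (hF : ∀ v : U, HasGradientAt F (gradF v) v)
    -- `∇F` is Lipschitz with constant `LgradF > 0`
    (LgradF : ℝ) (hLgradF : 0 < LgradF)
    (hgradlip : ∀ v w : U, ‖gradF v - gradF w‖ ≤ LgradF * ‖v - w‖)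
    -- `prox r v` is the (unique) minimizer of `w ↦ G w + ‖w - v‖² / (2 r)`
    (prox : ℝ → U → U)
    (hprox : ∀ r : ℝ, 0 < r → ∀ v w : U,
      G (prox r v) + ((‖prox r v - v‖ ^ 2 / (2 * r) : ℝ) : EReal) ≤
        G w + ((‖w - v‖ ^ 2 / (2 * r) : ℝ) : EReal)) :
    ∀ η : ℝ, 0 < η → η ≤ 1 → ∀ v : U, G v ≠ ⊤ → ∀ Δ : ℝ, 0 < Δ → Δ ≤ 1 / LgradF →
      η * (⟪gradF v, v - prox Δ (v - Δ • gradF v)⟫ +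
          (G v).toReal - (G (prox Δ (v - Δ • gradF v))).toReal -
          1 / (2 * Δ) * ‖prox Δ (v - Δ • gradF v) - v‖ ^ 2) ≤
        (F v + (G v).toReal) -
          (F (prox Δ (v - Δ • gradF v)) + (G (prox Δ (v - Δ • gradF v))).toReal) :=
  prox_grad_small_radius_successful_general G hGbot F gradF hF LgradF hgradlip prox hprox
end

section
/- Let t₀ < T and 0 < a ≤ b. Let (u_k) be a sequence of measurable functions u_k : (t₀,T) → ℝ with u_k(t) ∈ {0} ∪ [a,b] for almost all t. Suppose u_k converges weakly in L²(t₀,T) to ū, and sgn∘u_k converges in L¹(t₀,T) to a measurable function ᾱ : (t₀,T) → {0,1}, where sgn(x) := 1 if x > 0 and sgn(x) := 0 if x = 0. Then ᾱ = sgn∘ū almost everywhere on (t₀,T), and ū(t) ∈ {0} ∪ [a,b] for almost all t ∈ (t₀,T). -/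
/-! Every admissible value satisfies `a · sgn x ≤ x ≤ b · sgn x`. On a measurable set `E`, the
integrals of `u_k` converge to those of `ū` (test the weak convergence against `𝟙_E ∈ L²`) and
those of `sgn ∘ u_k` to those of `ᾱ` (L¹ convergence), so these inequalities pass to the limit:
`a ᾱ ≤ ū ≤ b ᾱ` a.e. As `ᾱ ∈ {0,1}`, this forces `ū = 0` where `ᾱ = 0` and `ū ∈ [a,b]`
where `ᾱ = 1`. -/

open Filter MeasureTheory Set
open scoped Topology ENNReal

section SetIntegralLimits

variable {α ι : Type*} [MeasurableSpace α] {μ : Measure α} {l : Filter ι}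

theorem tendsto_setIntegral_of_tendsto_integral_abs_sub {F : ι → α → ℝ} {f : α → ℝ}
    (hFi : ∀ i, Integrable (F i) μ) (hf : Integrable f μ)
    (hF : Tendsto (fun i => ∫ x, |F i x - f x| ∂μ) l (𝓝 0)) (E : Set α) :
    Tendsto (fun i => ∫ x in E, F i x ∂μ) l (𝓝 (∫ x in E, f x ∂μ)) := by
  rw [tendsto_iff_norm_sub_tendsto_zero]
  refine squeeze_zero (fun i => norm_nonneg _) (fun i => ?_) hF
  rw [← integral_sub (hFi i).integrableOn hf.integrableOn]
  calc ‖∫ x in E, (F i x - f x) ∂μ‖ ≤ ∫ x in E, ‖F i x - f x‖ ∂μ :=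
        norm_integral_le_integral_norm _
    _ ≤ ∫ x, |F i x - f x| ∂μ :=
        setIntegral_le_integral ((hFi i).sub hf).norm (ae_of_all _ fun _ => norm_nonneg _)

theorem tendsto_setIntegral_of_weakly_tendsto_L2 {F : ι → α → ℝ} {f : α → ℝ}
    (hweak : ∀ g : α → ℝ, MemLp g 2 μ →
      Tendsto (fun i => ∫ x, F i x * g x ∂μ) l (𝓝 (∫ x, f x * g x ∂μ)))
    {E : Set α} (hE : MeasurableSet E) (hμE : μ E ≠ ∞) :
    Tendsto (fun i => ∫ x in E, F i x ∂μ) l (𝓝 (∫ x in E, f x ∂μ)) := by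
  have h_indicator (h : α → ℝ) :
      ∫ x, h x * E.indicator (fun _ => 1) x ∂μ = ∫ x in E, h x ∂μ := by
    rw [← integral_indicator hE]
    simp_rw [← indicator_mul_right, mul_one]
  simpa only [h_indicator] using hweak _ (memLp_indicator_const 2 hE (1 : ℝ) (Or.inr hμE))

theorem ae_le_of_tendsto_setIntegral [l.NeBot] {F G : ι → α → ℝ} {f g : α → ℝ}
    (hFi : ∀ i, Integrable (F i) μ) (hGi : ∀ i, Integrable (G i) μ)
    (hf : Integrable f μ) (hg : Integrable g μ) (hFG : ∀ i, F i ≤ᵐ[μ] G i)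
    (hF : ∀ E, MeasurableSet E → μ E < ∞ →
      Tendsto (fun i => ∫ x in E, F i x ∂μ) l (𝓝 (∫ x in E, f x ∂μ)))
    (hG : ∀ E, MeasurableSet E → μ E < ∞ →
      Tendsto (fun i => ∫ x in E, G i x ∂μ) l (𝓝 (∫ x in E, g x ∂μ))) :
    f ≤ᵐ[μ] g :=
  ae_le_of_forall_setIntegral_le hf hg fun E hE hμE =>
    le_of_tendsto_of_tendsto' (hF E hE hμE) (hG E hE hμE) fun i =>
      setIntegral_mono_ae (hFi i).integrableOn (hGi i).integrableOn (hFG i)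

end SetIntegralLimits

noncomputable def sgn (x : ℝ) : ℝ := if 0 < x then 1 else 0

lemma abs_sgn_le_one (x : ℝ) : |sgn x| ≤ 1 := by
  unfold sgn; split_ifs <;> norm_num

lemma mul_sgn_le_self_and_le_mul_sgn {a b x : ℝ} (ha : 0 < a)
    (hx : x ∈ ({0} : Set ℝ) ∪ Icc a b) : a * sgn x ≤ x ∧ x ≤ b * sgn x := by
  rcases hx with rfl | ⟨hax, hxb⟩
  · simp [sgn]
  · simp [sgn, ha.trans_le hax, hax, hxb]

lemma eq_sgn_and_mem_of_mul_le_of_le_mul {a b x y : ℝ} (ha : 0 < a) (hy : y = 0 ∨ y = 1)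
    (hlow : a * y ≤ x) (hup : x ≤ b * y) : y = sgn x ∧ x ∈ ({0} : Set ℝ) ∪ Icc a b := by
  rcases hy with rfl | rfl
  · obtain rfl : x = 0 := le_antisymm (by simpa using hup) (by simpa using hlow)
    simp [sgn]
  · rw [mul_one] at hlow hup
    simp [sgn, ha.trans_le hlow, hlow, hup]

lemma measurable_sgn : Measurable sgn :=
  Measurable.ite measurableSet_Ioi measurable_const measurable_const

lemma Measurable.integrable_sgn_comp {α : Type*} [MeasurableSpace α] {μ : Measure α}
    [IsFiniteMeasure μ] {f : α → ℝ} (hf : Measurable f) : Integrable (fun x => sgn (f x)) μ :=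
  (integrable_const (1 : ℝ)).mono' (measurable_sgn.comp hf).aestronglyMeasurable
    (ae_of_all _ fun x => abs_sgn_le_one (f x))

theorem compatibility_of_limits_general
    (t₀ T a b : ℝ) (ha : 0 < a)
    (μ : Measure ℝ) (hμ : μ = volume.restrict (Set.Ioo t₀ T))
    (u : ℕ → ℝ → ℝ) (ubar α : ℝ → ℝ)
    (hu_meas : ∀ k : ℕ, Measurable (u k))
    (hα_meas : Measurable α)
    -- the `u_k` are admissible: values in `{0} ∪ [a,b]` a.e.
    (hu_vals : ∀ k : ℕ, ∀ᵐ t ∂μ, u k t ∈ ({0} : Set ℝ) ∪ Set.Icc a b)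
    -- `ᾱ` takes values in `{0,1}`
    (hα_vals : ∀ᵐ t ∂μ, α t = 0 ∨ α t = 1)
    -- `ū ∈ L²`
    (hubar_L2 : MemLp ubar 2 μ)
    -- weak convergence `u_k ⇀ ū` in `L²(t₀,T)`
    (hweak : ∀ g : ℝ → ℝ, MemLp g 2 μ →
      Tendsto (fun k : ℕ => ∫ t, u k t * g t ∂μ) atTop (𝓝 (∫ t, ubar t * g t ∂μ)))
    -- convergence `sgn(u_k) → ᾱ` in `L¹(t₀,T)`
    (hsgn : Tendsto
      (fun k : ℕ => ∫ t, |(if 0 < u k t then (1 : ℝ) else 0) - α t| ∂μ)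
      atTop (𝓝 0)) :
    (∀ᵐ t ∂μ, α t = (if 0 < ubar t then (1 : ℝ) else 0)) ∧
    (∀ᵐ t ∂μ, ubar t ∈ ({0} : Set ℝ) ∪ Set.Icc a b) := by
  have : IsFiniteMeasure μ := hμ ▸ inferInstance
  set s : ℕ → ℝ → ℝ := fun k t => sgn (u k t)
  have hs_int (k : ℕ) : Integrable (s k) μ := (hu_meas k).integrable_sgn_comp
  have hα_int : Integrable α μ :=
    (integrable_const (1 : ℝ)).mono' hα_meas.aestronglyMeasurable <| by
      filter_upwards [hα_vals] with t ht
      rcases ht with ht | ht <;> simp [ht]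
  have hubar_int : Integrable ubar μ := hubar_L2.integrable one_le_two
  have hsgn_le (k : ℕ) : (fun t => a * s k t) ≤ᵐ[μ] u k :=
    (hu_vals k).mono fun _ ht => (mul_sgn_le_self_and_le_mul_sgn ha ht).1
  have hle_sgn (k : ℕ) : u k ≤ᵐ[μ] fun t => b * s k t :=
    (hu_vals k).mono fun _ ht => (mul_sgn_le_self_and_le_mul_sgn ha ht).2
  have hu_int (k : ℕ) : Integrable (u k) μ :=
    integrable_of_le_of_le (hu_meas k).aestronglyMeasurable (hsgn_le k) (hle_sgn k)
      ((hs_int k).const_mul a) ((hs_int k).const_mul b)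
  have hs_lim (c : ℝ) (E : Set ℝ) (_ : MeasurableSet E) (_ : μ E < ∞) :
      Tendsto (fun k => ∫ t in E, c * s k t ∂μ) atTop (𝓝 (∫ t in E, c * α t ∂μ)) := by
    simpa only [integral_const_mul] using
      (tendsto_setIntegral_of_tendsto_integral_abs_sub hs_int hα_int hsgn E).const_mul c
  have hu_lim (E : Set ℝ) (hE : MeasurableSet E) (hμE : μ E < ∞) :=
    tendsto_setIntegral_of_weakly_tendsto_L2 hweak hE hμE.ne
  have hlow : (fun t => a * α t) ≤ᵐ[μ] ubar :=
    ae_le_of_tendsto_setIntegral (fun k => (hs_int k).const_mul a) hu_int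
      (hα_int.const_mul a) hubar_int hsgn_le (hs_lim a) hu_lim
  have hup : ubar ≤ᵐ[μ] fun t => b * α t :=
    ae_le_of_tendsto_setIntegral hu_int (fun k => (hs_int k).const_mul b)
      hubar_int (hα_int.const_mul b) hle_sgn hu_lim (hs_lim b)
  have hlimit : ∀ᵐ t ∂μ, α t = sgn (ubar t) ∧ ubar t ∈ ({0} : Set ℝ) ∪ Icc a b := by
    filter_upwards [hlow, hup, hα_vals] with t hlow hup hα
    exact eq_sgn_and_mem_of_mul_le_of_le_mul ha hα hlow hup
  exact ⟨hlimit.mono fun _ h => h.1, hlimit.mono fun _ h => h.2⟩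

/-- Lemma 4.3 / `lem:compatibility_limits` (scalar case): if admissible controls `u_k`
converge weakly in `L²(t₀,T)` to `ū` and `sgn ∘ u_k` converges in `L¹(t₀,T)` to a
`{0,1}`-valued function `ᾱ`, then `ᾱ = sgn ∘ ū` a.e. and `ū` takes values in
`{0} ∪ [a,b]` a.e. -/
theorem compatibility_of_limits
    (t₀ T a b : ℝ) (ht : t₀ < T) (ha : 0 < a) (hab : a ≤ b)
    (μ : Measure ℝ) (hμ : μ = volume.restrict (Set.Ioo t₀ T))
    (u : ℕ → ℝ → ℝ) (ubar α : ℝ → ℝ)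
    (hu_meas : ∀ k : ℕ, Measurable (u k)) (hubar_meas : Measurable ubar)
    (hα_meas : Measurable α)
    -- the `u_k` are admissible: values in `{0} ∪ [a,b]` a.e.
    (hu_vals : ∀ k : ℕ, ∀ᵐ t ∂μ, u k t ∈ ({0} : Set ℝ) ∪ Set.Icc a b)
    -- `ᾱ` takes values in `{0,1}`
    (hα_vals : ∀ᵐ t ∂μ, α t = 0 ∨ α t = 1)
    -- `ū ∈ L²`
    (hubar_L2 : MemLp ubar 2 μ)
    -- weak convergence `u_k ⇀ ū` in `L²(t₀,T)`
    (hweak : ∀ g : ℝ → ℝ, MemLp g 2 μ →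
      Tendsto (fun k : ℕ => ∫ t, u k t * g t ∂μ) atTop (𝓝 (∫ t, ubar t * g t ∂μ)))
    -- convergence `sgn(u_k) → ᾱ` in `L¹(t₀,T)`
    (hsgn : Tendsto
      (fun k : ℕ => ∫ t, |(if 0 < u k t then (1 : ℝ) else 0) - α t| ∂μ)
      atTop (𝓝 0)) :
    (∀ᵐ t ∂μ, α t = (if 0 < ubar t then (1 : ℝ) else 0)) ∧
    (∀ᵐ t ∂μ, ubar t ∈ ({0} : Set ℝ) ∪ Set.Icc a b) :=
  compatibility_of_limits_general t₀ T a b ha μ hμ u ubar α hu_meas hα_meas hu_vals hα_vals hubar_L2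
    hweak hsgn
end

section
/- Let t₀ < T and 0 < a ≤ b. Let u ∈ L∞(t₀,T) satisfy u(t) ∈ {0} ∪ [a,b] for a.e. t and TV(sgn(u)) < ∞, where for x : [t₀,T] → {0,1} extended by 0 to ℝ, TV(x) := sup{∫_ℝ x(t)φ′(t) dt : φ ∈ C_c¹(ℝ;[−1,1])}, and sgn(u)(t) := 1 if u(t) > 0, else 0. Set K := TV(sgn(u))/2 (so TV(sgn(u)) = 2K with K a nonnegative integer). Then there exists a unique vector t̂ ∈ ℝ^{2K} with t₀ ≤ t̂₁ < t̂₂ < ⋯ < t̂_{2K} ≤ T such that sgn(u) = Σ_{j=1}^{K} χ_{[t̂_{2j−1}, t̂_{2j}]} almost everywhere on (t₀,T). -/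
open MeasureTheory
open scoped ENNReal

/-- `sgn(x) = 1` if `x > 0`, else `0`. -/
noncomputable def sgn01 (x : ℝ) : ℝ := if 0 < x then 1 else 0

/-- Total variation of a function `x : ℝ → ℝ` (thought of as defined on `[t₀,T]` and
extended by `0`), defined by duality against `C¹` test functions with values in `[-1,1]`;
jumps at the endpoints are counted. -/
noncomputable def totalVar (x : ℝ → ℝ) : ℝ≥0∞ :=
  ⨆ φ : {φ : ℝ → ℝ // ContDiff ℝ 1 φ ∧ HasCompactSupport φ ∧
      ∀ t : ℝ, φ t ∈ Set.Icc (-1 : ℝ) 1},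
    ENNReal.ofReal (∫ t : ℝ, x t * deriv (φ : ℝ → ℝ) t)

/-!
Put `A = {t ∈ (t₀, T) | 0 < u t}`, so that the switching pattern is `1_A`. Call `x` a
density-zero (density-one) point of `A` if `A` (resp. `Aᶜ`) has density `0` at `x`. If
`x₀ < x₁ < ⋯ < x₂ₖ` alternate between density-zero and density-one points, a smooth test function
climbing by `2` across each `x₂ᵢ₊₁` and dropping by `1` across each `x₂ᵢ` next to it gives
`TV(1_A) ≥ 2k`; so finite total variation bounds the length of such chains.

Bounded alternation lets us peel off the first interval `[a, b]` on which `A` has full measure,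
followed by a null gap: `a` is the essential infimum of `A` and `b` the first time `A` stops having
full measure; if `a = b`, or if `A` charges every right neighbourhood of `b`, points of both kinds
accumulate there, giving chains of every length. Iterating, `A` agrees a.e. with a union of `K`
disjoint intervals `[a_j, b_j]`, and the peeling also produces a chain with `k = K`. For such a
union `∫ 1_A φ' = ∑ (φ b_j - φ a_j) ≤ 2K`, hence `TV(1_A) = 2K`. The endpoints are unique: a
finite union of non-degenerate closed intervals is the closure of its interior, hence determined
by its a.e. class, and its frontier is the set of endpoints.
-/

open Set Filter Topology Metric

/-! ### Points of density zero -/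

def HasDensityZeroAt (S : Set ℝ) (x : ℝ) : Prop :=
  Tendsto (fun r => volume (S ∩ closedBall x r) / volume (closedBall x r)) (𝓝[>] 0) (𝓝 0)

namespace HasDensityZeroAt

variable {S T : Set ℝ} {x : ℝ}

theorem eventually_measure_le (h : HasDensityZeroAt S x) {ε : ℝ} (hε : 0 < ε) :
    ∀ᶠ r in 𝓝[>] 0, volume (S ∩ closedBall x r) ≤ ENNReal.ofReal (ε * r) := by
  filter_upwards [h.eventually (gt_mem_nhds (ENNReal.ofReal_pos.2 (half_pos hε))),
    self_mem_nhdsWithin] with r hr (hr0 : 0 < r)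
  rw [Real.volume_closedBall, ENNReal.div_lt_iff (Or.inl (by simpa using hr0))
    (Or.inl ENNReal.ofReal_ne_top), ← ENNReal.ofReal_mul (by positivity)] at hr
  exact hr.le.trans_eq (by congr 1; ring)

theorem of_ae_subset (h : HasDensityZeroAt S x) {δ : ℝ} (hδ : 0 < δ)
    (hT : volume ((T ∩ ball x δ) \ S) = 0) : HasDensityZeroAt T x := by
  refine tendsto_of_tendsto_of_tendsto_of_le_of_le' tendsto_const_nhds h
    (Eventually.of_forall fun _ => zero_le) ?_
  filter_upwards [Ioo_mem_nhdsGT hδ] with r hr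
  refine ENNReal.div_le_div_right ?_ _
  calc volume (T ∩ closedBall x r)
      ≤ volume (S ∩ closedBall x r ∪ ((T ∩ ball x δ) \ S)) := by
        refine measure_mono fun t ht => ?_
        by_cases htS : t ∈ S
        · exact Or.inl ⟨htS, ht.2⟩
        · exact Or.inr ⟨⟨ht.1, closedBall_subset_ball hr.2 ht.2⟩, htS⟩
    _ ≤ volume (S ∩ closedBall x r) := (measure_union_le _ _).trans (by rw [hT, add_zero])

theorem mono (h : HasDensityZeroAt S x) (hT : T ⊆ S) : HasDensityZeroAt T x :=
  h.of_ae_subset one_pos (by rw [sdiff_eq_empty.2 (inter_subset_left.trans hT), measure_empty])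

theorem of_measure_inter_ball_eq_zero {δ : ℝ} (hδ : 0 < δ)
    (hS : volume (S ∩ ball x δ) = 0) : HasDensityZeroAt S x := by
  refine of_ae_subset (S := ∅) ?_ hδ (by simpa using hS)
  simp [HasDensityZeroAt]

theorem not_Iio_subset (h : HasDensityZeroAt S x) : ¬ Iio x ⊆ S := by
  intro hS
  obtain ⟨r, hr, hr0 : 0 < r⟩ := ((h.eventually_measure_le one_half_pos).and
    self_mem_nhdsWithin).exists
  have : ENNReal.ofReal r ≤ ENNReal.ofReal (1 / 2 * r) := by
    calc ENNReal.ofReal r = volume (Ioo (x - r) x) := by simp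
      _ ≤ volume (S ∩ closedBall x r) := measure_mono fun t ht =>
          ⟨hS ht.2, Real.closedBall_eq_Icc ▸ ⟨ht.1.le, by linarith [ht.2]⟩⟩
      _ ≤ _ := hr
  rw [ENNReal.ofReal_le_ofReal_iff (by positivity)] at this
  linarith

end HasDensityZeroAt

theorem ae_hasDensityZeroAt {S : Set ℝ} (hS : MeasurableSet S) :
    ∀ᵐ x, x ∉ S → HasDensityZeroAt S x := by
  filter_upwards [Besicovitch.ae_tendsto_measure_inter_div_of_measurableSet volume hS]
    with x hx hxS
  simpa [HasDensityZeroAt, hxS] using hx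

theorem exists_mem_hasDensityZeroAt {S B : Set ℝ} (hS : MeasurableSet S)
    (hB : volume (B \ S) ≠ 0) : ∃ x ∈ B, HasDensityZeroAt S x := by
  obtain ⟨x, hx, hxS⟩ := Measure.exists_mem_of_measure_ne_zero_of_ae hB
    (ae_restrict_of_ae (ae_hasDensityZeroAt hS))
  exact ⟨x, hx.1, hxS hx.2⟩

theorem hasDensityZeroAt_sub_one {A : Set ℝ} {l u : ℝ} (hAlu : A ⊆ Icc l u) :
    HasDensityZeroAt A (l - 1) := .of_measure_inter_ball_eq_zero one_pos <| by
  rw [eq_empty_of_forall_notMem fun t (ht : t ∈ A ∩ ball (l - 1) 1) => ?_, measure_empty]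
  rw [Real.ball_eq_Ioo] at ht
  exact (hAlu ht.1).1.not_gt (by linarith [ht.2.2])

/-! ### Test functions -/

theorem ofReal_integral_le_totalVar (x : ℝ → ℝ) {φ : ℝ → ℝ} (h₁ : ContDiff ℝ 1 φ)
    (h₂ : HasCompactSupport φ) (h₃ : ∀ t, φ t ∈ Icc (-1 : ℝ) 1) :
    ENNReal.ofReal (∫ t, x t * deriv φ t) ≤ totalVar x :=
  le_iSup (fun φ : {φ : ℝ → ℝ // ContDiff ℝ 1 φ ∧ HasCompactSupport φ ∧
    ∀ t : ℝ, φ t ∈ Set.Icc (-1 : ℝ) 1} => ENNReal.ofReal (∫ t, x t * deriv (φ : ℝ → ℝ) t))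
    ⟨φ, h₁, h₂, h₃⟩

theorem totalVar_congr {f g : ℝ → ℝ} (h : f =ᵐ[volume] g) : totalVar f = totalVar g :=
  iSup_congr fun _ => congrArg ENNReal.ofReal (integral_congr_ae (h.mul (EventuallyEq.refl _ _)))

theorem ofReal_two_mul_natCast (k : ℕ) : ENNReal.ofReal (2 * k) = 2 * (k : ℝ≥0∞) := by
  rw [ENNReal.ofReal_mul zero_le_two, ENNReal.ofReal_ofNat, ENNReal.ofReal_natCast]

theorem integral_indicator_one_mul {α : Type*} [MeasurableSpace α] {μ : Measure α} {S : Set α}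
    (hS : MeasurableSet S) (g : α → ℝ) : ∫ t, S.indicator 1 t * g t ∂μ = ∫ t in S, g t ∂μ := by
  rw [← integral_indicator hS]
  congr 1 with t
  by_cases ht : t ∈ S <;> simp [ht]

open Real in
theorem deriv_smoothTransition_eq_zero {s : ℝ} (hs : s ∉ Icc 0 1) :
    deriv smoothTransition s = 0 := by
  rw [mem_Icc, not_and_or, not_le, not_le] at hs
  rcases hs with h | h
  · rw [(eventuallyEq_of_mem (Iio_mem_nhds h) fun t ht =>
      smoothTransition.zero_of_nonpos (le_of_lt ht)).deriv_eq, deriv_const]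
  · rw [(eventuallyEq_of_mem (Ioi_mem_nhds h) fun t ht =>
      smoothTransition.one_of_one_le (le_of_lt ht)).deriv_eq, deriv_const]

open Real in
theorem exists_abs_deriv_smoothTransition_le : ∃ C, ∀ s, |deriv smoothTransition s| ≤ C :=
  ((smoothTransition.contDiff (n := 1)).continuous_deriv le_rfl).bounded_above_of_compact_support
    (HasCompactSupport.intro isCompact_Icc fun _ => deriv_smoothTransition_eq_zero)

noncomputable def ramp (r c t : ℝ) : ℝ := Real.smoothTransition ((t - c + r) / (2 * r))

noncomputable def ramp' (r c t : ℝ) : ℝ :=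
  deriv Real.smoothTransition ((t - c + r) / (2 * r)) / (2 * r)

section Ramp

open Real

variable {r c t : ℝ}

theorem contDiff_ramp : ContDiff ℝ 1 (ramp r c) :=
  smoothTransition.contDiff.comp (by fun_prop)

theorem hasDerivAt_ramp : HasDerivAt (ramp r c) (ramp' r c t) t := by
  have h := ((smoothTransition.contDiff (n := 1)).differentiable one_ne_zero _).hasDerivAt.comp t
    ((((hasDerivAt_id t).sub_const c).add_const r).div_const (2 * r))
  rw [mul_one_div] at h
  exact h

theorem continuous_ramp' : Continuous (ramp' r c) :=
  (((smoothTransition.contDiff (n := 1)).continuous_deriv le_rfl).comp (by fun_prop)).div_const _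

theorem ramp_antitone (hr : 0 < r) {c' : ℝ} (hc : c ≤ c') : ramp r c' t ≤ ramp r c t :=
  smoothTransition.monotone (by gcongr)

theorem ramp_nonneg : 0 ≤ ramp r c t := smoothTransition.nonneg _

theorem ramp_le_one : ramp r c t ≤ 1 := smoothTransition.le_one _

theorem ramp_eq_zero (hr : 0 < r) (ht : t ≤ c - r) : ramp r c t = 0 :=
  smoothTransition.zero_of_nonpos (div_nonpos_of_nonpos_of_nonneg (by linarith) (by linarith))

theorem ramp_eq_one (hr : 0 < r) (ht : c + r ≤ t) : ramp r c t = 1 :=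
  smoothTransition.one_of_one_le ((one_le_div (by linarith)).2 (by linarith))

theorem ramp'_eq_zero (hr : 0 < r) (ht : t ∉ closedBall c r) : ramp' r c t = 0 := by
  rw [Real.closedBall_eq_Icc, mem_Icc, not_and_or, not_le, not_le] at ht
  rw [ramp', deriv_smoothTransition_eq_zero, zero_div]
  rw [mem_Icc, not_and_or, not_le, not_le, div_neg_iff, one_lt_div (by linarith)]
  rcases ht with ht | ht
  · exact Or.inl (Or.inr ⟨by linarith, by linarith⟩)
  · exact Or.inr (by linarith)

theorem integrable_ramp' (hr : 0 < r) : Integrable (ramp' r c) :=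
  continuous_ramp'.integrable_of_hasCompactSupport
    (HasCompactSupport.intro (isCompact_closedBall c r) fun _ => ramp'_eq_zero hr)

theorem integral_ramp' (hr : 0 < r) : ∫ t, ramp' r c t = 1 := by
  have hbot : Tendsto (ramp r c) atBot (𝓝 0) :=
    tendsto_const_nhds.congr' ((eventually_le_atBot (c - r)).mono fun t ht =>
      (ramp_eq_zero hr ht).symm)
  have htop : Tendsto (ramp r c) atTop (𝓝 1) :=
    tendsto_const_nhds.congr' ((eventually_ge_atTop (c + r)).mono fun t ht =>
      (ramp_eq_one hr ht).symm)
  rw [integral_of_hasDerivAt_of_tendsto (fun _ => hasDerivAt_ramp) (integrable_ramp' hr) hbot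
    htop, sub_zero]

variable {C : ℝ} (hC : ∀ s, |deriv smoothTransition s| ≤ C)
include hC

theorem setIntegral_ramp'_le {S : Set ℝ} (hS : MeasurableSet S) (hr : 0 < r) :
    ∫ t in S, ramp' r c t ≤ C / (2 * r) * volume.real (S ∩ closedBall c r) := by
  rw [setIntegral_eq_of_subset_of_forall_sdiff_eq_zero hS inter_subset_left
    fun t ht => ramp'_eq_zero hr fun h => ht.2 ⟨ht.1, h⟩]
  refine (Real.le_norm_self _).trans (norm_setIntegral_le_of_norm_le_const ?_ fun t _ => ?_)
  · exact (measure_mono inter_subset_right).trans_lt measure_closedBall_lt_top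
  · rw [Real.norm_eq_abs, ramp', abs_div, abs_of_pos (by positivity : 0 < 2 * r)]
    exact div_le_div_of_nonneg_right (hC _) (by positivity)

theorem one_sub_le_setIntegral_ramp' {S : Set ℝ} (hS : MeasurableSet S) (hr : 0 < r) :
    1 - C / (2 * r) * volume.real (Sᶜ ∩ closedBall c r) ≤ ∫ t in S, ramp' r c t := by
  have := integral_add_compl hS (integrable_ramp' (c := c) hr)
  rw [integral_ramp' hr] at this
  linarith [setIntegral_ramp'_le hC hS.compl hr (c := c)]

end Ramp

/-! ### Alternating chains of density points -/

structure IsAlternating (A : Set ℝ) (n : ℕ) (x : ℕ → ℝ) : Prop where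
  lt_succ : ∀ i < 2 * n, x i < x (i + 1)
  densityZero : ∀ i ≤ n, HasDensityZeroAt A (x (2 * i))
  densityOne : ∀ i < n, HasDensityZeroAt Aᶜ (x (2 * i + 1))

theorem isAlternating_zero {A : Set ℝ} {q : ℝ} (hq : HasDensityZeroAt A q) :
    IsAlternating A 0 (fun _ => q) where
  lt_succ _ h := absurd h (Nat.not_lt_zero _)
  densityZero _ _ := hq
  densityOne _ h := absurd h (Nat.not_lt_zero _)

def cons2 {α : Type*} (a b : α) (y : ℕ → α) : ℕ → α
  | 0 => a
  | 1 => b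
  | n + 2 => y n

namespace IsAlternating

variable {A : Set ℝ} {n : ℕ} {y : ℕ → ℝ}

theorem cons2 (hy : IsAlternating A n y) {q p : ℝ} (hq : HasDensityZeroAt A q)
    (hp : HasDensityZeroAt Aᶜ p) (hqp : q < p) (hpy : p < y 0) :
    IsAlternating A (n + 1) (_root_.cons2 q p y) where
  lt_succ
    | 0, _ => hqp
    | 1, _ => hpy
    | i + 2, hi => hy.lt_succ i (by omega)
  densityZero
    | 0, _ => hq
    | i + 1, hi => hy.densityZero i (by omega)
  densityOne
    | 0, _ => hp
    | i + 1, hi => hy.densityOne i (by omega)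

theorem lt_of_inter_Ioi {m : ℝ} (hy : IsAlternating (A ∩ Ioi m) n y) {i : ℕ} (hi : i < n) :
    m < y (2 * i + 1) := by
  by_contra! h
  exact (hy.densityOne i hi).not_Iio_subset fun s hs hsA => (hs.trans_le h).not_gt hsA.2

theorem update_zero_of_inter_Ioi {m : ℝ} (hy : IsAlternating (A ∩ Ioi m) n y)
    (hm : HasDensityZeroAt A m) : IsAlternating A n (Function.update y 0 m) where
  lt_succ
    | 0, h => by simpa using hy.lt_of_inter_Ioi (i := 0) (by omega)
    | i + 1, h => by simpa using hy.lt_succ (i + 1) h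
  densityZero
    | 0, _ => by simpa using hm
    | i + 1, hi => by
      have hlt : m < y (2 * (i + 1)) :=
        (hy.lt_of_inter_Ioi (i := i) (by omega)).trans (hy.lt_succ (2 * i + 1) (by omega))
      refine (hy.densityZero (i + 1) hi).of_ae_subset (sub_pos.2 hlt) (measure_mono_null
        (fun s ⟨⟨hsA, hsb⟩, hsn⟩ => hsn ⟨hsA, ?_⟩) measure_empty)
      rw [Real.ball_eq_Ioo, mem_Ioo] at hsb
      exact show m < s by linarith [hsb.1]
  densityOne i hi := by
    simpa using (hy.densityOne i hi).mono (compl_subset_compl.2 inter_subset_left)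

end IsAlternating

theorem exists_isAlternating_of_accumulates {A : Set ℝ} (hA : MeasurableSet A) {s : ℝ}
    (h₁ : ∀ t > s, volume (A ∩ Ioo s t) ≠ 0) (h₀ : ∀ t > s, volume (Ioo s t \ A) ≠ 0) :
    ∀ n, ∃ x, IsAlternating A n x ∧ s < x 0
  | 0 => by
    obtain ⟨q, hq, hqA⟩ := exists_mem_hasDensityZeroAt hA (h₀ (s + 1) (by linarith))
    exact ⟨fun _ => q, isAlternating_zero hqA, hq.1⟩
  | n + 1 => by
    obtain ⟨y, hy, hsy⟩ := exists_isAlternating_of_accumulates hA h₁ h₀ n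
    obtain ⟨p, hp, hpA⟩ := exists_mem_hasDensityZeroAt hA.compl (B := Ioo s (y 0))
      (by rw [Set.sdiff_compl, inter_comm]; exact h₁ _ hsy)
    obtain ⟨q, hq, hqA⟩ := exists_mem_hasDensityZeroAt hA (h₀ p hp.1)
    exact ⟨cons2 q p y, hy.cons2 hqA hpA hq.2 hp.2, hq.1⟩

/-! ### The total variation of a set with an alternating chain -/

open Finset in
theorem abs_sum_two_mul_sub_le {α : Type*} [CommRing α] [LinearOrder α] [IsStrictOrderedRing α]
    {k : ℕ} {R : ℕ → α} (hR : ∀ m < 2 * k, R (m + 1) ≤ R m) :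
    |∑ i ∈ range k, (2 * R (2 * i + 1) - R (2 * i) - R (2 * i + 2))| ≤ R 0 - R (2 * k) := by
  calc _ ≤ ∑ i ∈ range k, |2 * R (2 * i + 1) - R (2 * i) - R (2 * i + 2)| :=
        abs_sum_le_sum_abs _ _
    _ ≤ ∑ i ∈ range k, (R (2 * i) - R (2 * i + 2)) := by
        refine sum_le_sum fun i hi => abs_le.2 ⟨?_, ?_⟩ <;>
          linarith [hR (2 * i) (by simp at hi; omega), hR (2 * i + 1) (by simp at hi; omega)]
    _ = R 0 - R (2 * k) := by simpa [mul_add] using sum_range_sub' (fun i => R (2 * i)) k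

noncomputable def alternatingTest (r : ℝ) (k : ℕ) (x : ℕ → ℝ) (t : ℝ) : ℝ :=
  ∑ i ∈ Finset.range k, (2 * ramp r (x (2 * i + 1)) t - ramp r (x (2 * i)) t -
    ramp r (x (2 * i + 2)) t)

section AlternatingTest

variable {r : ℝ} {k : ℕ} {x : ℕ → ℝ}

theorem abs_alternatingTest_le (hr : 0 < r) (hx : ∀ i < 2 * k, x i < x (i + 1)) (t : ℝ) :
    |alternatingTest r k x t| ≤ ramp r (x 0) t - ramp r (x (2 * k)) t :=
  abs_sum_two_mul_sub_le (R := fun m => ramp r (x m) t) fun m hm => ramp_antitone hr (hx m hm).le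

theorem mem_Icc_alternatingTest (hr : 0 < r) (hx : ∀ i < 2 * k, x i < x (i + 1)) (t : ℝ) :
    alternatingTest r k x t ∈ Icc (-1 : ℝ) 1 := by
  have h₀ := ramp_le_one (r := r) (c := x 0) (t := t)
  have h₁ := ramp_nonneg (r := r) (c := x (2 * k)) (t := t)
  exact abs_le.1 ((abs_alternatingTest_le hr hx t).trans (by linarith))

theorem hasDerivAt_alternatingTest (t : ℝ) :
    HasDerivAt (alternatingTest r k x) (∑ i ∈ Finset.range k, (2 * ramp' r (x (2 * i + 1)) t -
      ramp' r (x (2 * i)) t - ramp' r (x (2 * i + 2)) t)) t :=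
  HasDerivAt.fun_sum fun _ _ =>
    ((hasDerivAt_ramp.const_mul 2).sub hasDerivAt_ramp).sub hasDerivAt_ramp

theorem contDiff_alternatingTest : ContDiff ℝ 1 (alternatingTest r k x) :=
  ContDiff.sum fun _ _ => ((contDiff_ramp.const_smul (2 : ℝ)).sub contDiff_ramp).sub contDiff_ramp

theorem hasCompactSupport_alternatingTest (hr : 0 < r) (hx : ∀ i < 2 * k, x i < x (i + 1)) :
    HasCompactSupport (alternatingTest r k x) := by
  refine HasCompactSupport.intro (isCompact_Icc (a := x 0 - r) (b := x (2 * k) + r))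
    fun t ht => abs_nonpos_iff.1 ((abs_alternatingTest_le hr hx t).trans ?_)
  rw [mem_Icc, not_and_or, not_le, not_le] at ht
  rcases ht with ht | ht
  · linarith [ramp_eq_zero hr (c := x 0) ht.le, ramp_nonneg (r := r) (c := x (2 * k)) (t := t)]
  · linarith [ramp_eq_one hr (c := x (2 * k)) ht.le, ramp_le_one (r := r) (c := x 0) (t := t)]

theorem integral_indicator_mul_deriv_alternatingTest {A : Set ℝ} (hA : MeasurableSet A)
    (hr : 0 < r) :
    ∫ t, A.indicator 1 t * deriv (alternatingTest r k x) t =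
      ∑ i ∈ Finset.range k, (2 * (∫ t in A, ramp' r (x (2 * i + 1)) t) -
        (∫ t in A, ramp' r (x (2 * i)) t) - ∫ t in A, ramp' r (x (2 * i + 2)) t) := by
  have hi : ∀ c, IntegrableOn (ramp' r c) A := fun c => (integrable_ramp' hr).integrableOn
  simp_rw [integral_indicator_one_mul hA, (hasDerivAt_alternatingTest _).deriv]
  rw [integral_finsetSum _ fun i _ => (((hi _).const_mul 2).sub' (hi _)).sub' (hi _)]
  refine Finset.sum_congr rfl fun i _ => ?_
  rw [integral_sub (((hi _).const_mul 2).sub' (hi _)) (hi _),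
    integral_sub ((hi _).const_mul 2) (hi _), integral_const_mul]

end AlternatingTest

theorem ofReal_le_totalVar_of_isAlternating {A : Set ℝ} (hA : MeasurableSet A) {k : ℕ}
    {x : ℕ → ℝ} (hx : IsAlternating A k x) {η : ℝ} (hη : 0 < η) :
    ENNReal.ofReal ((2 - η) * k) ≤ totalVar (A.indicator 1) := by
  obtain ⟨C, hC⟩ := exists_abs_deriv_smoothTransition_le
  have hC0 : 0 ≤ C := (abs_nonneg _).trans (hC 0)
  set ε := η / (2 * C + 1)
  have hε : 0 < ε := by positivity
  have hCε : 2 * C * ε ≤ η := by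
    rw [← mul_div_assoc, div_le_iff₀ (by positivity)]; nlinarith
  obtain ⟨r, h₀, h₁, hr⟩ : ∃ r, (∀ i ∈ Finset.range (k + 1),
      volume (A ∩ closedBall (x (2 * i)) r) ≤ ENNReal.ofReal (ε * r)) ∧
      (∀ i ∈ Finset.range k, volume (Aᶜ ∩ closedBall (x (2 * i + 1)) r) ≤
        ENNReal.ofReal (ε * r)) ∧ 0 < r :=
    (((eventually_all_finset _).2 fun i hi => (hx.densityZero i
      (Nat.lt_succ_iff.1 (Finset.mem_range.1 hi))).eventually_measure_le hε).and
    (((eventually_all_finset _).2 fun i hi => (hx.densityOne i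
      (Finset.mem_range.1 hi)).eventually_measure_le hε).and self_mem_nhdsWithin)).exists
  have hvol : ∀ {S : Set ℝ} {c : ℝ}, volume (S ∩ closedBall c r) ≤ ENNReal.ofReal (ε * r) →
      C / (2 * r) * volume.real (S ∩ closedBall c r) ≤ C * ε / 2 := fun h => by
    calc _ ≤ C / (2 * r) * (ε * r) := by
          gcongr; exact ENNReal.toReal_le_of_le_ofReal (by positivity) h
      _ = C * ε / 2 := by field_simp
  have hI₀ : ∀ i ≤ k, ∫ t in A, ramp' r (x (2 * i)) t ≤ C * ε / 2 := fun i hi =>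
    (setIntegral_ramp'_le hC hA hr).trans (hvol (h₀ i (by simp; omega)))
  have hI₁ : ∀ i < k, 1 - C * ε / 2 ≤ ∫ t in A, ramp' r (x (2 * i + 1)) t := fun i hi =>
    (sub_le_sub_left (hvol (h₁ i (by simpa using hi))) 1).trans
      (one_sub_le_setIntegral_ramp' hC hA hr)
  refine le_trans (ENNReal.ofReal_le_ofReal ?_) (ofReal_integral_le_totalVar _
    contDiff_alternatingTest (hasCompactSupport_alternatingTest hr hx.lt_succ)
    (mem_Icc_alternatingTest hr hx.lt_succ))
  rw [integral_indicator_mul_deriv_alternatingTest hA hr]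
  calc (2 - η) * k ≤ ∑ _i ∈ Finset.range k, (2 - 2 * C * ε) := by
        simp only [Finset.sum_const, Finset.card_range, nsmul_eq_mul]
        rw [mul_comm]; gcongr
    _ ≤ _ := Finset.sum_le_sum fun i hi => by
        have hik := Finset.mem_range.1 hi
        have hnext := hI₀ (i + 1) hik
        rw [mul_add, mul_one] at hnext
        linarith [hI₁ i hik, hI₀ i hik.le]

theorem two_mul_le_totalVar_of_isAlternating {A : Set ℝ} (hA : MeasurableSet A) {k : ℕ}
    {x : ℕ → ℝ} (hx : IsAlternating A k x) : 2 * (k : ℝ≥0∞) ≤ totalVar (A.indicator 1) := by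
  have hlim : Tendsto (fun η => ENNReal.ofReal ((2 - η) * k)) (𝓝[>] 0)
      (𝓝 (ENNReal.ofReal ((2 - 0) * k))) :=
    ENNReal.tendsto_ofReal (((tendsto_const_nhds.sub tendsto_id).mul
      tendsto_const_nhds).mono_left nhdsWithin_le_nhds)
  rw [sub_zero, ofReal_two_mul_natCast] at hlim
  exact le_of_tendsto hlim (eventually_nhdsWithin_of_forall fun η hη =>
    ofReal_le_totalVar_of_isAlternating hA hx hη)

theorem exists_forall_not_isAlternating {A : Set ℝ} (hA : MeasurableSet A)
    (hTV : totalVar (A.indicator 1) < ⊤) : ∃ N, ∀ x, ¬ IsAlternating A N x := by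
  obtain ⟨N, hN⟩ := ENNReal.exists_nat_gt hTV.ne
  exact ⟨N, fun x hx => (two_mul_le_totalVar_of_isAlternating hA hx).not_gt
    (hN.trans_le (le_mul_of_one_le_left zero_le one_le_two))⟩

/-! ### Finite unions of closed intervals -/

namespace Fin

variable {K : ℕ}

def leftIdx (j : Fin K) : Fin (2 * K) := ⟨2 * j, by omega⟩

def rightIdx (j : Fin K) : Fin (2 * K) := ⟨2 * j + 1, by omega⟩

theorem leftIdx_lt_rightIdx (j : Fin K) : leftIdx j < rightIdx j := by
  simp [leftIdx, rightIdx, Fin.lt_def]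

theorem rightIdx_lt_leftIdx {i j : Fin K} (h : i < j) : rightIdx i < leftIdx j := by
  simp only [leftIdx, rightIdx, Fin.lt_def] at h ⊢; omega

end Fin

theorem strictMono_fin_of_lt_succ {α : Type*} [Preorder α] {n : ℕ} {y : ℕ → α}
    (hy : ∀ i, i + 1 < n → y i < y (i + 1)) : StrictMono (fun i : Fin n => y i) := by
  cases n with
  | zero => exact fun i => i.elim0
  | succ n => exact Fin.strictMono_iff_lt_succ.2 fun i => hy i (by have := i.isLt; omega)

open Fin

def stepSet {K : ℕ} (y : Fin (2 * K) → ℝ) : Set ℝ :=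
  ⋃ j : Fin K, Icc (y (leftIdx j)) (y (rightIdx j))

section StepSet

variable {K : ℕ} {y : Fin (2 * K) → ℝ}

theorem isClosed_stepSet : IsClosed (stepSet y) :=
  isClosed_iUnion_of_finite fun _ => isClosed_Icc

theorem stepSet_subset_Icc {t₀ T : ℝ} (hy : ∀ j, y j ∈ Icc t₀ T) : stepSet y ⊆ Icc t₀ T :=
  iUnion_subset fun _ => Icc_subset_Icc (hy _).1 (hy _).2

theorem stepSet_cons2 (a b : ℝ) (x : ℕ → ℝ) :
    stepSet (fun i : Fin (2 * (K + 1)) => cons2 a b x i) =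
      Icc a b ∪ stepSet (fun i : Fin (2 * K) => x i) := by
  ext t
  simp only [stepSet, mem_iUnion, mem_union, Fin.exists_fin_succ]
  rfl

theorem notMem_stepSet {s : ℝ} {m : ℕ} (hm : Even m) (hs : ∀ i, y i ≠ s)
    (hlt : ∀ i, y i < s ↔ (i : ℕ) < m) : s ∉ stepSet y := by
  simp only [stepSet, mem_iUnion, mem_Icc, not_exists, not_and, not_le]
  intro j hj
  have h : (leftIdx j : ℕ) < m := (hlt _).1 (hj.lt_of_ne (hs _))
  refine (hlt _).2 ?_
  obtain ⟨k, rfl⟩ := hm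
  simp only [leftIdx, rightIdx] at h ⊢
  omega

theorem Ioo_subset_interior_stepSet (j : Fin K) :
    Ioo (y (leftIdx j)) (y (rightIdx j)) ⊆ interior (stepSet y) :=
  interior_maximal (Ioo_subset_Icc_self.trans
    (subset_iUnion (fun j => Icc (y (leftIdx j)) (y (rightIdx j))) j)) isOpen_Ioo

end StepSet

namespace StrictMono

variable {K : ℕ} {y : Fin (2 * K) → ℝ}

theorem pairwise_disjoint_Icc (hy : StrictMono y) :
    Pairwise (Function.onFun Disjoint fun j : Fin K => Icc (y (leftIdx j)) (y (rightIdx j))) := by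
  intro i j hij
  rcases hij.lt_or_gt with h | h
  · exact disjoint_left.2 fun t hi hj => (hy (rightIdx_lt_leftIdx h)).not_ge (hj.1.trans hi.2)
  · exact disjoint_left.2 fun t hi hj => (hy (rightIdx_lt_leftIdx h)).not_ge (hi.1.trans hj.2)

theorem sum_indicator_Icc (hy : StrictMono y) (t : ℝ) :
    ∑ j : Fin K, (Icc (y (leftIdx j)) (y (rightIdx j))).indicator (1 : ℝ → ℝ) t =
      (stepSet y).indicator 1 t := by
  rw [stepSet, ← Finset.indicator_biUnion_apply _ _
    fun i _ j _ hij => hy.pairwise_disjoint_Icc hij]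
  simp

theorem integral_indicator_stepSet_mul_deriv (hy : StrictMono y) {φ : ℝ → ℝ}
    (hφ : ContDiff ℝ 1 φ) :
    ∫ t, (stepSet y).indicator 1 t * deriv φ t =
      ∑ j : Fin K, (φ (y (rightIdx j)) - φ (y (leftIdx j))) := by
  have hφ' := hφ.continuous_deriv le_rfl
  rw [integral_indicator_one_mul isClosed_stepSet.measurableSet, stepSet,
    integral_iUnion_fintype (fun _ => measurableSet_Icc) hy.pairwise_disjoint_Icc
      fun _ => hφ'.integrableOn_Icc]
  refine Finset.sum_congr rfl fun j _ => ?_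
  rw [integral_Icc_eq_integral_Ioc, ← intervalIntegral.integral_of_le
    (hy (leftIdx_lt_rightIdx j)).le, intervalIntegral.integral_deriv_eq_sub
    (fun t _ => (hφ.differentiable one_ne_zero).differentiableAt) (hφ'.intervalIntegrable _ _)]

theorem totalVar_indicator_stepSet_le (hy : StrictMono y) :
    totalVar ((stepSet y).indicator 1) ≤ 2 * K := by
  refine iSup_le fun ⟨φ, hφ, _, hφ1⟩ => ?_
  rw [hy.integral_indicator_stepSet_mul_deriv hφ, ← ofReal_two_mul_natCast]
  refine ENNReal.ofReal_le_ofReal ?_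
  calc _ ≤ ∑ _j : Fin K, (2 : ℝ) := Finset.sum_le_sum fun j _ => by
        linarith [(hφ1 (y (rightIdx j))).2, (hφ1 (y (leftIdx j))).1]
    _ = 2 * K := by simp [mul_comm]

theorem mem_stepSet (hy : StrictMono y) (m : Fin (2 * K)) : y m ∈ stepSet y := by
  obtain ⟨j, hj | hj⟩ := Nat.even_or_odd' m
  · have hjK : j < K := by omega
    refine mem_iUnion.2 ⟨⟨j, hjK⟩, ?_⟩
    rw [show m = leftIdx ⟨j, hjK⟩ from Fin.ext hj]
    exact ⟨le_rfl, (hy (leftIdx_lt_rightIdx _)).le⟩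
  · have hjK : j < K := by omega
    refine mem_iUnion.2 ⟨⟨j, hjK⟩, ?_⟩
    rw [show m = rightIdx ⟨j, hjK⟩ from Fin.ext hj]
    exact ⟨(hy (leftIdx_lt_rightIdx _)).le, le_rfl⟩

theorem frequently_notMem_stepSet (hy : StrictMono y) (m : Fin (2 * K)) :
    ∃ᶠ s in 𝓝 (y m), s ∉ stepSet y := by
  obtain ⟨j, hj | hj⟩ := Nat.even_or_odd' m
  · refine (Eventually.frequently (f := 𝓝[<] y m) ?_).filter_mono nhdsWithin_le_nhds
    have : ∀ i, ∀ᶠ s in 𝓝[<] y m, y i ≠ s ∧ (y i < s ↔ (i : ℕ) < m) := fun i => by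
      rcases lt_or_ge i m with hi | hi
      · filter_upwards [Ioo_mem_nhdsLT (hy hi)] with s hs
        exact ⟨hs.1.ne, iff_of_true hs.1 hi⟩
      · filter_upwards [self_mem_nhdsWithin] with s (hs : s < y m)
        have := hy.monotone hi
        exact ⟨by linarith, iff_of_false (by linarith) (by simpa using hi)⟩
    filter_upwards [eventually_all.2 this] with s hs
    exact notMem_stepSet ⟨j, by omega⟩ (fun i => (hs i).1) fun i => (hs i).2
  · refine (Eventually.frequently (f := 𝓝[>] y m) ?_).filter_mono nhdsWithin_le_nhds
    have : ∀ i, ∀ᶠ s in 𝓝[>] y m, y i ≠ s ∧ (y i < s ↔ (i : ℕ) < m + 1) := fun i => by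
      rcases le_or_gt i m with hi | hi
      · filter_upwards [self_mem_nhdsWithin] with s (hs : y m < s)
        have := hy.monotone hi
        exact ⟨by linarith, iff_of_true (by linarith) (by simpa [Nat.lt_succ_iff] using hi)⟩
      · filter_upwards [Ioo_mem_nhdsGT (hy hi)] with s hs
        exact ⟨hs.2.ne', iff_of_false (not_lt.2 hs.2.le) (by simpa [Nat.lt_succ_iff] using hi)⟩
    filter_upwards [eventually_all.2 this] with s hs
    exact notMem_stepSet ⟨j + 1, by omega⟩ (fun i => (hs i).1) fun i => (hs i).2

theorem frontier_stepSet (hy : StrictMono y) : frontier (stepSet y) = range y := by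
  refine subset_antisymm (fun t ht => ?_) ?_
  · obtain ⟨j, htj⟩ := mem_iUnion.1 (isClosed_stepSet.frontier_subset ht)
    by_contra hty
    exact ht.2 (Ioo_subset_interior_stepSet j ⟨htj.1.lt_of_ne fun h => hty ⟨_, h⟩,
      htj.2.lt_of_ne fun h => hty ⟨_, h.symm⟩⟩)
  rintro _ ⟨m, rfl⟩
  rw [frontier_eq_closure_inter_closure]
  exact ⟨subset_closure (hy.mem_stepSet m),
    mem_closure_iff_frequently.2 (hy.frequently_notMem_stepSet m)⟩

theorem stepSet_subset_closure_interior (hy : StrictMono y) :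
    stepSet y ⊆ closure (interior (stepSet y)) :=
  iUnion_subset fun j => by
    rw [← closure_Ioo (hy (leftIdx_lt_rightIdx j)).ne]
    exact closure_mono (Ioo_subset_interior_stepSet j)

end StrictMono

theorem subset_of_ae_le_of_subset_closure_interior {X : Type*} [TopologicalSpace X]
    [MeasurableSpace X] {μ : Measure X} [μ.IsOpenPosMeasure] {U V : Set X}
    (hU : U ⊆ closure (interior U)) (hV : IsClosed V) (h : U ≤ᵐ[μ] V) : U ⊆ V := by
  have : interior U \ V = ∅ := ((isOpen_interior.sdiff hV).measure_eq_zero_iff μ).1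
    (measure_mono_null (sdiff_subset_sdiff_left interior_subset) (ae_le_set.1 h))
  exact hU.trans (closure_minimal (sdiff_eq_empty.1 this) hV)

theorem StrictMono.eq_of_stepSet_ae_eq {K : ℕ} {y z : Fin (2 * K) → ℝ} (hy : StrictMono y)
    (hz : StrictMono z) (h : stepSet y =ᵐ[volume] stepSet z) : y = z := by
  have hyz : stepSet y = stepSet z :=
    (subset_of_ae_le_of_subset_closure_interior hy.stepSet_subset_closure_interior
      isClosed_stepSet h.le).antisymm
    (subset_of_ae_le_of_subset_closure_interior hz.stepSet_subset_closure_interior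
      isClosed_stepSet h.symm.le)
  exact (hy.range_inj hz).1 (by rw [← hy.frontier_stepSet, ← hz.frontier_stepSet, hyz])

/-! ### Peeling off the first interval -/

section

variable {μ : Measure ℝ}

theorem measure_inter_Iio_le_add [NullSingletonClass μ] (G : Set ℝ) (a t : ℝ) :
    μ (G ∩ Iio t) ≤ μ (G ∩ Iio a) + μ (G ∩ Ioo a t) := by
  calc μ (G ∩ Iio t) ≤ μ (G ∩ Iio a ∪ {a} ∪ G ∩ Ioo a t) :=
        measure_mono fun s ⟨hs, hst⟩ => by
          rcases lt_trichotomy s a with h | rfl | h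
          · exact Or.inl (Or.inl ⟨hs, h⟩)
          · exact Or.inl (Or.inr rfl)
          · exact Or.inr ⟨hs, h, hst⟩
    _ ≤ μ (G ∩ Iio a) + μ (G ∩ Ioo a t) :=
        (measure_union_le _ _).trans (add_le_add_left ((measure_union_le _ _).trans
          (by rw [measure_singleton, add_zero])) _)

theorem exists_measure_inter_Iio_eq_zero {G : Set ℝ} {t₁ t₂ : ℝ}
    (h₁ : μ (G ∩ Iio t₁) = 0) (h₂ : μ (G ∩ Iio t₂) ≠ 0) :
    ∃ c ∈ Icc t₁ t₂, μ (G ∩ Iio c) = 0 ∧ ∀ t > c, μ (G ∩ Iio t) ≠ 0 := by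
  set S := {t | μ (G ∩ Iio t) = 0}
  have hbdd : ∀ t ∈ S, t ≤ t₂ := fun t ht => by
    by_contra! h
    exact h₂ (measure_mono_null (inter_subset_inter_right _ (Iio_subset_Iio h.le)) ht)
  have hne : S.Nonempty := ⟨t₁, h₁⟩
  refine ⟨sSup S, ⟨le_csSup ⟨t₂, hbdd⟩ h₁, csSup_le hne hbdd⟩, ?_,
    fun t ht h0 => ht.not_ge (le_csSup ⟨t₂, hbdd⟩ h0)⟩
  have : G ∩ Iio (sSup S) ⊆ ⋃ n : ℕ, G ∩ Iio (sSup S - 1 / (n + 1)) := fun s ⟨hs, hsc⟩ => by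
    obtain ⟨n, hn⟩ := exists_nat_one_div_lt (sub_pos.2 (show s < sSup S from hsc))
    exact mem_iUnion.2 ⟨n, hs, show s < _ by linarith⟩
  refine measure_mono_null this (measure_iUnion_null fun n => ?_)
  obtain ⟨s, hs, hlt⟩ := exists_lt_of_lt_csSup hne
    (sub_lt_self (sSup S) (by positivity : (0 : ℝ) < 1 / (n + 1)))
  exact measure_mono_null (inter_subset_inter_right _ (Iio_subset_Iio hlt.le)) hs

end

section FirstInterval

variable {A : Set ℝ} {l u : ℝ}

theorem exists_left_endpoint (hAlu : A ⊆ Icc l u) (hA0 : volume A ≠ 0) :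
    ∃ a, l ≤ a ∧ a ≤ u ∧ volume (A ∩ Iio a) = 0 ∧ ∀ t > a, volume (A ∩ Ioo a t) ≠ 0 := by
  have hAl : A ∩ Iio l = ∅ := eq_empty_of_forall_notMem fun t ht => (hAlu ht.1).1.not_gt ht.2
  have hAu : A ∩ Iio (u + 1) = A := inter_eq_left.2 fun t ht => (hAlu ht).2.trans_lt (by simp)
  obtain ⟨a, ⟨hla, -⟩, ha0, ha⟩ := exists_measure_inter_Iio_eq_zero (μ := volume) (G := A)
    (by rw [hAl, measure_empty]) (by rwa [hAu])
  refine ⟨a, hla, ?_, ha0, fun t ht h => ha t ht (le_antisymm ?_ zero_le)⟩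
  · by_contra! h
    exact hA0 (measure_mono_null (fun t ht => ⟨ht, (hAlu ht).2.trans_lt h⟩ : A ⊆ A ∩ Iio a) ha0)
  · exact (measure_inter_Iio_le_add _ a t).trans (by rw [ha0, h, add_zero])

theorem exists_right_endpoint (hAlu : A ⊆ Icc l u) {a : ℝ} (hau : a ≤ u) :
    ∃ b, a ≤ b ∧ b ≤ u ∧ volume (Ioo a b \ A) = 0 ∧ ∀ t > b, volume (Ioo b t \ A) ≠ 0 := by
  have hIoo : ∀ {s t}, a ≤ s → (Ioi a \ A) ∩ Ioo s t = Ioo s t \ A := fun hs => by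
    ext r; simp only [mem_inter_iff, Set.mem_sdiff, mem_Ioi, mem_Ioo]
    exact ⟨fun h => ⟨h.2, h.1.2⟩, fun h => ⟨⟨hs.trans_lt h.1.1, h.2⟩, h.1⟩⟩
  have hnull : ∀ {s}, u < s → Ioo u s ⊆ (Ioi a \ A) ∩ Iio s := fun _ t ht =>
    ⟨⟨hau.trans_lt ht.1, fun htA => (hAlu htA).2.not_gt ht.1⟩, ht.2⟩
  obtain ⟨b, ⟨hab, -⟩, hb0, hb⟩ := exists_measure_inter_Iio_eq_zero (G := Ioi a \ A) (t₁ := a)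
    (t₂ := u + 1) (by rw [sdiff_inter_right_comm, Ioi_inter_Iio, Ioo_self, empty_sdiff,
      measure_empty]) fun h => ((Measure.measure_Ioo_eq_zero volume).1
        (measure_mono_null (hnull (lt_add_one u)) h)).not_gt (lt_add_one u)
  refine ⟨b, hab, ?_, ?_, fun t ht h => hb t ht (le_antisymm ?_ zero_le)⟩
  · by_contra! hub
    exact ((Measure.measure_Ioo_eq_zero volume).1 (measure_mono_null (hnull hub) hb0)).not_gt hub
  · rw [← hIoo le_rfl]
    exact measure_mono_null (inter_subset_inter_right _ Ioo_subset_Iio_self) hb0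
  · exact (measure_inter_Iio_le_add _ b t).trans (by rw [hb0, hIoo hab, h, add_zero])

theorem exists_first_interval (hA : MeasurableSet A) (hAlu : A ⊆ Icc l u)
    (hA0 : volume A ≠ 0) {N : ℕ} (hN : ∀ x, ¬ IsAlternating A N x) :
    ∃ a b c, l ≤ a ∧ a < b ∧ b ≤ u ∧ b < c ∧ volume (A ∩ Iio a) = 0 ∧
      volume (Ioo a b \ A) = 0 ∧ volume (A ∩ Ioo b c) = 0 := by
  have hacc : ∀ s, (∀ t > s, volume (A ∩ Ioo s t) ≠ 0) →
      (∀ t > s, volume (Ioo s t \ A) ≠ 0) → False := fun s h₁ h₀ => by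
    obtain ⟨x, hx, -⟩ := exists_isAlternating_of_accumulates hA h₁ h₀ N
    exact hN x hx
  obtain ⟨a, hla, hau, ha0, ha⟩ := exists_left_endpoint hAlu hA0
  obtain ⟨b, hab, hbu, hb0, hb⟩ := exists_right_endpoint hAlu hau
  have hab : a < b := hab.lt_of_ne fun h => hacc a ha (h ▸ hb)
  obtain ⟨c, hbc, hc⟩ : ∃ c > b, volume (A ∩ Ioo b c) = 0 := by
    by_contra! h
    exact hacc b h hb
  exact ⟨a, b, c, hla, hab, hbu, hbc, ha0, hb0, hc⟩

theorem inter_Iic_ae_eq_Icc {a b c m : ℝ} (hbm : b < m) (hmc : m < c)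
    (ha : volume (A ∩ Iio a) = 0) (hab : volume (Ioo a b \ A) = 0)
    (hbc : volume (A ∩ Ioo b c) = 0) : (A ∩ Iic m : Set ℝ) =ᵐ[volume] Icc a b := by
  refine ae_eq_set.2 ⟨measure_mono_null (fun t ⟨⟨htA, htm⟩, htI⟩ => ?_)
    (measure_union_null ha hbc), measure_mono_null (fun t ⟨htI, htA⟩ => ?_)
    (measure_union_null (measure_union_null hab (measure_singleton a)) (measure_singleton b))⟩
  · rcases lt_or_ge t a with h | h
    · exact Or.inl ⟨htA, h⟩
    · exact Or.inr ⟨htA, lt_of_not_ge fun h' => htI ⟨h, h'⟩, lt_of_le_of_lt htm hmc⟩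
  · have htA' : t ∉ A := fun h => htA ⟨h, htI.2.trans hbm.le⟩
    rcases htI.1.eq_or_lt with rfl | h₁
    · exact Or.inl (Or.inr rfl)
    rcases htI.2.eq_or_lt with rfl | h₂
    · exact Or.inr rfl
    exact Or.inl (Or.inl ⟨⟨h₁, h₂⟩, htA'⟩)

end FirstInterval

theorem hasDensityZeroAt_of_measure_inter_Ioo_eq_zero {A : Set ℝ} {b c m : ℝ} (hbm : b < m)
    (hmc : m < c) (h : volume (A ∩ Ioo b c) = 0) : HasDensityZeroAt A m :=
  .of_measure_inter_ball_eq_zero (lt_min (sub_pos.2 hbm) (sub_pos.2 hmc)) <|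
    measure_mono_null (fun t ht => ⟨ht.1, by
      rw [Real.ball_eq_Ioo] at ht
      exact ⟨by linarith [ht.2.1, min_le_left (m - b) (c - m)],
        by linarith [ht.2.2, min_le_right (m - b) (c - m)]⟩⟩ :
        A ∩ ball m (min (m - b) (c - m)) ⊆ A ∩ Ioo b c) h

theorem exists_mem_Ioo_hasDensityZeroAt_compl {A : Set ℝ} (hA : MeasurableSet A) {a b : ℝ}
    (hab : a < b) (h : volume (Ioo a b \ A) = 0) : ∃ p ∈ Ioo a b, HasDensityZeroAt Aᶜ p := by
  refine exists_mem_hasDensityZeroAt hA.compl ?_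
  have h' : volume (Ioo a b ∩ A) = volume (Ioo a b) := by
    rw [← measure_inter_add_sdiff (Ioo a b) hA, h, add_zero]
  rw [Set.sdiff_compl, h']
  exact (Measure.measure_Ioo_eq_zero volume).not.2 (not_le.2 hab)

theorem exists_ae_eq_stepSet (u : ℝ) : ∀ (N : ℕ) (l : ℝ) (A : Set ℝ), MeasurableSet A →
    A ⊆ Icc l u → (∀ x, ¬ IsAlternating A N x) →
    ∃ (K : ℕ) (y : ℕ → ℝ), (∀ i, i + 1 < 2 * K → y i < y (i + 1)) ∧
      (∀ i < 2 * K, y i ∈ Icc l u) ∧ A =ᵐ[volume] stepSet (fun i : Fin (2 * K) => y i) ∧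
      ∃ x, IsAlternating A K x
  | 0, _, _, _, hAlu, hN => absurd (isAlternating_zero (hasDensityZeroAt_sub_one hAlu)) (hN _)
  | N + 1, l, A, hA, hAlu, hN => by
    have hfar := hasDensityZeroAt_sub_one hAlu
    by_cases hA0 : volume A = 0
    · refine ⟨0, fun _ => 0, fun i hi => absurd hi (by omega), fun i hi => absurd hi (by omega),
        ?_, _, isAlternating_zero hfar⟩
      simpa [stepSet] using ae_eq_empty.2 hA0
    obtain ⟨a, b, c, hla, hab, hbu, hbc, ha0, hab0, hbc0⟩ := exists_first_interval hA hAlu hA0 hN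
    obtain ⟨m, hbm, hmc⟩ := exists_between hbc
    have hm := hasDensityZeroAt_of_measure_inter_Ioo_eq_zero hbm hmc hbc0
    obtain ⟨p, hp, hpA⟩ := exists_mem_Ioo_hasDensityZeroAt_compl hA hab hab0
    -- A chain for `A ∩ Ioi m` may start where `A` has positive density, so it restarts at `m`.
    have hext : ∀ {n y}, IsAlternating (A ∩ Ioi m) n y →
        IsAlternating A (n + 1) (cons2 (l - 1) p (Function.update y 0 m)) := fun hy =>
      (hy.update_zero_of_inter_Ioi hm).cons2 hfar hpA (by linarith [hp.1])
        (by simpa using hp.2.trans hbm)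
    obtain ⟨K, y, hy, hyI, hAy, x, hx⟩ := exists_ae_eq_stepSet u N m (A ∩ Ioi m)
      (hA.inter measurableSet_Ioi) (fun t ht => ⟨le_of_lt ht.2, (hAlu ht.1).2⟩)
      (fun x hx => hN _ (hext hx))
    refine ⟨K + 1, cons2 a b y, ?_, ?_, ?_, _, hext hx⟩
    · rintro (_ | _ | i) hi
      · exact hab
      · exact hbm.trans_le (hyI 0 (by omega)).1
      · exact hy i (by omega)
    · rintro (_ | _ | i) hi
      · exact ⟨hla, hab.le.trans hbu⟩
      · exact ⟨hla.trans hab.le, hbu⟩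
      · have := hyI i (by omega)
        exact show y i ∈ Icc l u from ⟨by linarith [this.1], this.2⟩
    · rw [stepSet_cons2, ← inter_union_compl A (Iic m), compl_Iic]
      exact ae_eq_set_union (inter_Iic_ae_eq_Icc hbm hmc ha0 hab0 hbc0) hAy

theorem indicator_sgn01_comp (S : Set ℝ) (u : ℝ → ℝ) :
    S.indicator (fun s => sgn01 (u s)) = (S ∩ {s | 0 < u s}).indicator 1 := by
  ext t
  by_cases ht : t ∈ S <;> by_cases hu : 0 < u t <;> simp [sgn01, ht, hu]

theorem ae_eq_of_ae_restrict_Ioo {A S : Set ℝ} {t₀ T : ℝ} (hA : A ⊆ Icc t₀ T)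
    (hS : S ⊆ Icc t₀ T)
    (h : ∀ᵐ t ∂volume.restrict (Ioo t₀ T), A.indicator (1 : ℝ → ℝ) t = S.indicator 1 t) :
    A =ᵐ[volume] S := by
  rw [Measure.restrict_congr_set Ioo_ae_eq_Icc, ae_restrict_iff' measurableSet_Icc] at h
  filter_upwards [h] with t ht
  by_cases htI : t ∈ Icc t₀ T
  · exact propext ((indicator_eq_one_iff_mem ℝ).symm.trans
      ((ht htI).symm ▸ indicator_eq_one_iff_mem ℝ))
  · exact propext ⟨fun h => absurd (hA h) htI, fun h => absurd (hS h) htI⟩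

/-- Proposition 4.5 / `cor:minimal_representation`: minimal representation of the
switching pattern `sgn(u)` of an admissible control with finitely many switches. -/
theorem minimal_representation
    (t₀ T : ℝ)
    (u : ℝ → ℝ) (hu_meas : Measurable u)
    (hTV : totalVar (Set.indicator (Set.Ioo t₀ T) fun s : ℝ => sgn01 (u s)) < ⊤) :
    ∃ K : ℕ,
      totalVar (Set.indicator (Set.Ioo t₀ T) fun s : ℝ => sgn01 (u s)) =
        2 * (K : ℝ≥0∞) ∧
      ∃! th : Fin (2 * K) → ℝ,
        (∀ j, th j ∈ Set.Icc t₀ T) ∧ StrictMono th ∧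
        ∀ᵐ t ∂(volume.restrict (Set.Ioo t₀ T)),
          sgn01 (u t) = ∑ j : Fin K,
            Set.indicator
              (Set.Icc (th ⟨2 * (j : ℕ), by have := j.isLt; omega⟩)
                (th ⟨2 * (j : ℕ) + 1, by have := j.isLt; omega⟩))
              (fun _ => (1 : ℝ)) t := by
  set A := Ioo t₀ T ∩ {s | 0 < u s}
  have hA : MeasurableSet A := measurableSet_Ioo.inter (measurableSet_lt measurable_const hu_meas)
  have hAI : A ⊆ Icc t₀ T := inter_subset_left.trans Ioo_subset_Icc_self
  have hsgn : ∀ t ∈ Ioo t₀ T, sgn01 (u t) = A.indicator 1 t := fun t ht => by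
    rw [← indicator_sgn01_comp, indicator_of_mem ht]
  rw [indicator_sgn01_comp] at hTV ⊢
  obtain ⟨N, hN⟩ := exists_forall_not_isAlternating hA hTV
  obtain ⟨K, y, hy, hyI, hAy, x, hx⟩ := exists_ae_eq_stepSet T N t₀ A hA hAI hN
  have hmono : StrictMono (fun i : Fin (2 * K) => y i) := strictMono_fin_of_lt_succ hy
  refine ⟨K, le_antisymm ?_ (two_mul_le_totalVar_of_isAlternating hA hx), _,
    ⟨fun j => hyI j j.2, hmono, ?_⟩, fun z ⟨hzI, hz, hzA⟩ => hz.eq_of_stepSet_ae_eq hmono ?_⟩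
  · rw [totalVar_congr (indicator_ae_eq_of_ae_eq_set hAy)]
    exact hmono.totalVar_indicator_stepSet_le
  · filter_upwards [ae_restrict_of_ae (indicator_ae_eq_of_ae_eq_set (f := (1 : ℝ → ℝ)) hAy),
      ae_restrict_mem measurableSet_Ioo] with t h ht
    rw [hsgn t ht, h, ← hmono.sum_indicator_Icc]
    rfl
  · refine (ae_eq_of_ae_restrict_Ioo (stepSet_subset_Icc hzI) hAI ?_).trans hAy
    filter_upwards [hzA, ae_restrict_mem measurableSet_Ioo] with t h ht
    rw [← hsgn t ht, h, ← hz.sum_indicator_Icc]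
    rfl
end

section
/- Let 0 < a ≤ b and let g : [a,b] → ℝ be continuous and strongly convex with constant m > 0 on [a,b] (i.e., v ↦ g(v) − (m/2)v² is convex on [a,b]). Then: (i) the function v ↦ g(v)/v has a unique minimizer u* on [a,b]; (ii) there is a unique v* ∈ [a,b] such that g(w) ≥ g(v*) + (g(v*)/v*)·(w − v*) for all w ∈ [a,b] (that is, g(v*)/v* is a subgradient of g at v* relative to [a,b]); and (iii) u* = v*. Moreover, a point v ∈ [a,b] minimizes w ↦ g(w)/w over [a,b] if and only if g(w) ≥ g(v) + (g(v)/v)·(w − v) for all w ∈ [a,b]. -/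
/-- Lemma 4.7 / `lem:tangets`: for a strongly convex `g` on `[a,b]` with `0 < a ≤ b`,
the function `v ↦ g(v)/v` has a unique minimizer on `[a,b]`, the relative subgradient
inclusion `g(v)/v ∈ ∂g(v)` has a unique solution on `[a,b]`, both coincide, and a point
minimizes `g(·)/·` iff `g(v)/v` is a subgradient of `g` at `v` relative to `[a,b]`. -/
theorem tangent_through_origin_minimizer
    (a b m : ℝ) (ha : 0 < a) (hab : a ≤ b) (hm : 0 < m)
    (g : ℝ → ℝ) (hg_cont : ContinuousOn g (Set.Icc a b))
    -- strong convexity with constant `m` on `[a,b]`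
    (hg_sconv : ConvexOn ℝ (Set.Icc a b) (fun v : ℝ => g v - m / 2 * v ^ 2)) :
    -- (i) unique minimizer of `v ↦ g(v)/v` on `[a,b]`
    (∃! ustar : ℝ, ustar ∈ Set.Icc a b ∧
      ∀ v ∈ Set.Icc a b, g ustar / ustar ≤ g v / v) ∧
    -- (ii) unique solution of the subgradient inclusion `g(v)/v ∈ ∂g(v)` on `[a,b]`
    (∃! vstar : ℝ, vstar ∈ Set.Icc a b ∧
      ∀ w ∈ Set.Icc a b, g vstar + g vstar / vstar * (w - vstar) ≤ g w) ∧
    -- (iii) both coincide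
    (∀ ustar vstar : ℝ,
      (ustar ∈ Set.Icc a b ∧ ∀ v ∈ Set.Icc a b, g ustar / ustar ≤ g v / v) →
      (vstar ∈ Set.Icc a b ∧
        ∀ w ∈ Set.Icc a b, g vstar + g vstar / vstar * (w - vstar) ≤ g w) →
      ustar = vstar) ∧
    -- moreover: minimizer of `g(·)/·` iff subgradient inequality
    (∀ v ∈ Set.Icc a b,
      (∀ w ∈ Set.Icc a b, g v / v ≤ g w / w) ↔
      (∀ w ∈ Set.Icc a b, g v + g v / v * (w - v) ≤ g w)) := by
  have hpos : ∀ v ∈ Set.Icc a b, 0 < v := fun v hv => lt_of_lt_of_le ha hv.1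
  -- pointwise equivalence of the two conditions
  have key : ∀ v ∈ Set.Icc a b, ∀ w ∈ Set.Icc a b,
      (g v / v ≤ g w / w ↔ g v + g v / v * (w - v) ≤ g w) := by
    intro v hv w hw
    have hv0 : v ≠ 0 := (hpos v hv).ne'
    have heq : g v + g v / v * (w - v) = g v / v * w := by
      field_simp; ring
    rw [heq, le_div_iff₀ (hpos w hw)]
  -- strict convexity of g
  have hsq : StrictConvexOn ℝ (Set.Icc a b) (fun v : ℝ => m / 2 * v ^ 2) := by
    have h2 : StrictConvexOn ℝ (Set.Icc a b) (fun v : ℝ => v ^ 2) :=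
      (Even.strictConvexOn_pow (by norm_num) (by norm_num)).subset
        (Set.subset_univ _) (convex_Icc a b)
    refine ⟨convex_Icc a b, ?_⟩
    intro x hx y hy hxy p q hp hq hpq
    have h := h2.2 hx hy hxy hp hq hpq
    simp only [smul_eq_mul] at h ⊢
    nlinarith [mul_lt_mul_of_pos_left h (by positivity : (0:ℝ) < m / 2)]
  have hstrict : StrictConvexOn ℝ (Set.Icc a b) g := by
    have h := hg_sconv.add_strictConvexOn hsq
    have hfun : (fun v : ℝ => g v - m / 2 * v ^ 2) + (fun v : ℝ => m / 2 * v ^ 2) = g := by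
      funext v; simp
    rwa [hfun] at h
  -- existence of a minimizer of g(·)/·
  obtain ⟨u, hu, humin⟩ := (isCompact_Icc).exists_isMinOn (Set.nonempty_Icc.2 hab)
    (hg_cont.div continuousOn_id (fun v hv => (hpos v hv).ne'))
  have humin' : ∀ w ∈ Set.Icc a b, g u / u ≤ g w / w := fun w hw => humin hw
  -- uniqueness of minimizers
  have huniq : ∀ u1 ∈ Set.Icc a b, ∀ u2 ∈ Set.Icc a b,
      (∀ w ∈ Set.Icc a b, g u1 / u1 ≤ g w / w) →
      (∀ w ∈ Set.Icc a b, g u2 / u2 ≤ g w / w) → u1 = u2 := by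
    intro u1 hu1 u2 hu2 h1 h2
    by_contra hne
    have hc : g u1 / u1 = g u2 / u2 := le_antisymm (h1 u2 hu2) (h2 u1 hu1)
    set c := g u1 / u1 with hcdef
    have h10 : u1 ≠ 0 := (hpos u1 hu1).ne'
    have h20 : u2 ≠ 0 := (hpos u2 hu2).ne'
    have hg1 : g u1 = c * u1 := by
      rw [hcdef]; field_simp
    have hg2 : g u2 = c * u2 := by
      have : g u2 / u2 = c := hc.symm
      rw [← this]; field_simp
    have hz : (1/2 : ℝ) • u1 + (1/2 : ℝ) • u2 ∈ Set.Icc a b :=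
      (convex_Icc a b) hu1 hu2 (by norm_num) (by norm_num) (by norm_num)
    have hlt := hstrict.2 hu1 hu2 hne (by norm_num : (0:ℝ) < 1/2)
      (by norm_num : (0:ℝ) < 1/2) (by norm_num)
    set z := (1/2 : ℝ) • u1 + (1/2 : ℝ) • u2 with hzdef
    have hz' : z = u1/2 + u2/2 := by rw [hzdef]; simp [smul_eq_mul]; ring
    have hge : c * z ≤ g z := by
      have h := h1 z hz
      rw [le_div_iff₀ (hpos z hz)] at h
      exact h
    have hlt' : g z < (1/2) * g u1 + (1/2) * g u2 := by
      simpa [smul_eq_mul] using hlt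
    have hval : (1/2) * g u1 + (1/2) * g u2 = c * z := by
      rw [hg1, hg2, hz']; ring
    clear_value c z
    linarith
  -- subgradient property at u
  have husub : ∀ w ∈ Set.Icc a b, g u + g u / u * (w - u) ≤ g w :=
    fun w hw => (key u hu w hw).1 (humin' w hw)
  refine ⟨⟨u, ⟨hu, humin'⟩, ?_⟩, ⟨u, ⟨hu, husub⟩, ?_⟩, ?_, ?_⟩
  · rintro y ⟨hy, hymin⟩
    exact huniq y hy u hu hymin humin'
  · rintro y ⟨hy, hysub⟩
    exact huniq y hy u hu (fun w hw => (key y hy w hw).2 (hysub w hw)) humin'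
  · rintro u1 v1 ⟨h1a, h1b⟩ ⟨h2a, h2b⟩
    exact huniq u1 h1a v1 h2a h1b (fun w hw => (key v1 h2a w hw).2 (h2b w hw))
  · intro v hv
    exact ⟨fun h w hw => (key v hv w hw).1 (h w hw),
      fun h w hw => (key v hv w hw).2 (h w hw)⟩
end

section
/- Fix t₀ < T, N ∈ ℕ, and bounds 0 < a ≤ a_i ≤ b_i ≤ b for i = 1,…,N. Let u, w̄ and (w_k) be elements of L∞(t₀,T;ℝ^N) with i-th components taking values in {0}∪[a_i,b_i] almost everywhere. Suppose w_k → w̄ weakly in L²(t₀,T;ℝ^N) and sgn(w_k) → sgn(w̄) in L¹(t₀,T;ℝ^N), where sgn(x) := 1 if x > 0 and 0 if x = 0, applied componentwise and pointwise. Then Σ_{i=1}^{N} ∫_{{t : sgn(u_i(t))=1 and sgn(w̄_i(t))=1}} |u_i(t) − w̄_i(t)|² dt ≤ liminf_{k→∞} Σ_{i=1}^{N} ∫_{{t : sgn(u_i(t))=1 and sgn(w_{k,i}(t))=1}} |u_i(t) − w_{k,i}(t)|² dt. -/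
open Filter MeasureTheory
open scoped Topology

open Set

lemma sgn01_nonneg (x : ℝ) : 0 ≤ sgn01 x := by unfold sgn01; split_ifs <;> norm_num

lemma sgn01_le_one (x : ℝ) : sgn01 x ≤ 1 := by unfold sgn01; split_ifs <;> norm_num

lemma measurable_sgn01 : Measurable sgn01 :=
  Measurable.ite measurableSet_Ioi measurable_const measurable_const

lemma sgn01_mul_self_of_nonneg {x : ℝ} (hx : 0 ≤ x) : sgn01 x * x = x := by
  unfold sgn01; split_ifs with h
  · exact one_mul x
  · rw [zero_mul, le_antisymm (not_lt.1 h) hx]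

lemma indicator_setOf_pos_and_pos {α : Type*} (f g h : α → ℝ) (t : α) :
    {t | 0 < f t ∧ 0 < g t}.indicator h t = sgn01 (f t) * sgn01 (g t) * h t := by
  by_cases hf : 0 < f t <;> by_cases hg : 0 < g t <;> simp [indicator, sgn01, hf, hg]

lemma singleton_zero_union_Icc_subset_Icc {α β : ℝ} (h0 : 0 ≤ α) (hαβ : α ≤ β) :
    ({0} : Set ℝ) ∪ Icc α β ⊆ Icc 0 β :=
  union_subset (singleton_subset_iff.2 ⟨le_rfl, h0.trans hαβ⟩) (Icc_subset_Icc_left h0)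

lemma sgn01_mul_sub_two_mul (s u v w : ℝ) (hw : 0 ≤ w) :
    sgn01 w * (s * (u - v) * (u + v)) - 2 * (w * (s * (u - v))) =
      s * sgn01 w * (u - w) ^ 2 - s * sgn01 w * (w - v) ^ 2 := by
  linear_combination (2 * s * (u - v)) * sgn01_mul_self_of_nonneg hw

lemma le_liminf_of_tendsto_of_le {κ : Type*} {l : Filter κ} [l.NeBot] {F G : κ → ℝ} {L : ℝ}
    (hG : Tendsto G l (𝓝 L)) (hGF : ∀ᶠ k in l, G k ≤ F k) (hF : IsBoundedUnder (· ≤ ·) l F) :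
    L ≤ liminf F l :=
  hG.liminf_eq ▸ liminf_le_liminf hGF hG.isBoundedUnder_ge hF.isCoboundedUnder_ge

section

variable {α : Type*} [MeasurableSpace α] {μ : Measure α}

lemma memLp_top_sgn01_comp {f : α → ℝ} (hf : AEMeasurable f μ) :
    MemLp (fun t => sgn01 (f t)) ⊤ μ :=
  memLp_top_of_bound (measurable_sgn01.comp_aemeasurable hf).aestronglyMeasurable 1
    (ae_of_all _ fun t => by
      rw [Real.norm_of_nonneg (sgn01_nonneg _)]; exact sgn01_le_one _)

lemma memLp_top_of_ae_mem_Icc {f : α → ℝ} {B : ℝ} (hf : Measurable f)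
    (hB : ∀ᵐ t ∂μ, f t ∈ Icc 0 B) : MemLp f ⊤ μ :=
  memLp_top_of_bound hf.aestronglyMeasurable B
    (hB.mono fun t ht => by rw [Real.norm_of_nonneg ht.1]; exact ht.2)

lemma tendsto_integral_mul_of_tendsto_integral_abs_sub {κ : Type*} {l : Filter κ}
    {f : κ → α → ℝ} {f₀ g : α → ℝ} (hf : ∀ k, Integrable (f k) μ) (hf₀ : Integrable f₀ μ)
    (hg : MemLp g ⊤ μ) (hlim : Tendsto (fun k => ∫ t, |f k t - f₀ t| ∂μ) l (𝓝 0)) :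
    Tendsto (fun k => ∫ t, f k t * g t ∂μ) l (𝓝 (∫ t, f₀ t * g t ∂μ)) := by
  set C := lpNorm g ⊤ μ
  have hgC := ae_le_lpNorm_exponent_top hg
  have hbound : ∀ k, ‖∫ t, f k t * g t ∂μ - ∫ t, f₀ t * g t ∂μ‖ ≤
      C * ∫ t, |f k t - f₀ t| ∂μ := fun k => by
    have hfg : Integrable (fun t => f k t * g t) μ := (hf k).mul_of_top_left hg
    have hf₀g : Integrable (fun t => f₀ t * g t) μ := hf₀.mul_of_top_left hg
    rw [← integral_sub hfg hf₀g, ← integral_const_mul]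
    refine norm_integral_le_of_norm_le (((hf k).sub hf₀).abs.const_mul C) ?_
    filter_upwards [hgC] with t ht
    rw [← sub_mul, norm_mul, Real.norm_eq_abs, mul_comm]
    exact mul_le_mul_of_nonneg_right ht (abs_nonneg _)
  rw [tendsto_iff_norm_sub_tendsto_zero]
  exact squeeze_zero (fun k => norm_nonneg _) hbound (by simpa using hlim.const_mul C)

lemma tendsto_integral_of_tendsto_integral_sum {κ ι : Type*} [Fintype ι] {l : Filter κ}
    {F : κ → ι → α → ℝ} (hF : ∀ k i, Integrable (F k i) μ) (hF₀ : ∀ k i, 0 ≤ᵐ[μ] F k i)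
    (hlim : Tendsto (fun k => ∫ t, ∑ i, F k i t ∂μ) l (𝓝 0)) (i : ι) :
    Tendsto (fun k => ∫ t, F k i t ∂μ) l (𝓝 0) := by
  refine squeeze_zero (fun k => integral_nonneg_of_ae (hF₀ k i)) (fun k => ?_) hlim
  refine integral_mono_ae (hF k i) (integrable_finsetSum _ fun j _ => hF k j) ?_
  filter_upwards [ae_all_iff.2 (hF₀ k)] with t ht
  exact Finset.single_le_sum (fun j _ => ht j) (Finset.mem_univ i)

lemma tendsto_integral_mul_of_tendsto_integral_sum_mul {κ ι : Type*} [Fintype ι] {l : Filter κ}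
    {p : ENNReal} {w : κ → α → ι → ℝ} {v : α → ι → ℝ}
    (hweak : ∀ ψ : α → ι → ℝ, MemLp ψ p μ →
      Tendsto (fun k => ∫ t, ∑ i, w k t i * ψ t i ∂μ) l (𝓝 (∫ t, ∑ i, v t i * ψ t i ∂μ)))
    (i : ι) {φ : α → ℝ} (hφ : MemLp φ p μ) :
    Tendsto (fun k => ∫ t, w k t i * φ t ∂μ) l (𝓝 (∫ t, v t i * φ t ∂μ)) := by
  classical
  simpa [Pi.single_apply] using
    hweak _ ((ContinuousLinearMap.single ℝ (fun _ : ι => ℝ) i).comp_memLp' hφ)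

variable [IsFiniteMeasure μ]

lemma integral_sgn01_mul_sq_le {u w : α → ℝ} {B : ℝ} (hu : ∀ᵐ t ∂μ, u t ∈ Icc 0 B)
    (hw : ∀ᵐ t ∂μ, w t ∈ Icc 0 B) :
    ∫ t, sgn01 (u t) * sgn01 (w t) * (u t - w t) ^ 2 ∂μ ≤ B ^ 2 * μ.real univ := by
  have hpos : ∀ t, 0 ≤ sgn01 (u t) * sgn01 (w t) := fun t =>
    mul_nonneg (sgn01_nonneg _) (sgn01_nonneg _)
  calc ∫ t, sgn01 (u t) * sgn01 (w t) * (u t - w t) ^ 2 ∂μ ≤ ∫ _, B ^ 2 ∂μ := by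
        refine integral_mono_of_nonneg (ae_of_all _ fun t => mul_nonneg (hpos t) (sq_nonneg _))
          (integrable_const _) ?_
        filter_upwards [hu, hw] with t ⟨hu0, huB⟩ ⟨hw0, hwB⟩
        have hsq : (u t - w t) ^ 2 ≤ B ^ 2 := by nlinarith
        have hle : sgn01 (u t) * sgn01 (w t) ≤ 1 :=
          mul_le_one₀ (sgn01_le_one _) (sgn01_nonneg _) (sgn01_le_one _)
        nlinarith [hpos t, sq_nonneg (u t - w t)]
    _ = B ^ 2 * μ.real univ := by rw [integral_const, smul_eq_mul, mul_comm]

theorem exists_tendsto_le_integral_sgn01_mul_sq {u v : α → ℝ} {w : ℕ → α → ℝ}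
    (hu : MemLp u ⊤ μ) (hv : MemLp v ⊤ μ) (hw : ∀ k, MemLp (w k) ⊤ μ)
    (hv₀ : 0 ≤ᵐ[μ] v) (hw₀ : ∀ k, 0 ≤ᵐ[μ] w k)
    (hsgn : Tendsto (fun k => ∫ t, |sgn01 (w k t) - sgn01 (v t)| ∂μ) atTop (𝓝 0))
    (hweak : ∀ φ : α → ℝ, MemLp φ 2 μ →
      Tendsto (fun k => ∫ t, w k t * φ t ∂μ) atTop (𝓝 (∫ t, v t * φ t ∂μ))) :
    ∃ G : ℕ → ℝ, Tendsto G atTop (𝓝 (∫ t, sgn01 (u t) * sgn01 (v t) * (u t - v t) ^ 2 ∂μ)) ∧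
      ∀ k, G k ≤ ∫ t, sgn01 (u t) * sgn01 (w k t) * (u t - w k t) ^ 2 ∂μ := by
  have hs := memLp_top_sgn01_comp hu.aemeasurable
  have hσ := fun k => memLp_top_sgn01_comp (μ := μ) (hw k).aemeasurable
  have hσ₀ := (memLp_top_sgn01_comp hv.aemeasurable).integrable le_top
  set φ : α → ℝ := fun t => sgn01 (u t) * (u t - v t)
  have hφ : MemLp φ ⊤ μ := (hu.sub hv).mul' hs
  set h : α → ℝ := fun t => φ t * (u t + v t)
  have hh : MemLp h ⊤ μ := (hu.add hv).mul hφ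
  refine ⟨fun k => ∫ t, sgn01 (w k t) * h t ∂μ - 2 * ∫ t, w k t * φ t ∂μ, ?_, fun k => ?_⟩
  · have hlim := (tendsto_integral_mul_of_tendsto_integral_abs_sub
      (fun k => (hσ k).integrable le_top) hσ₀ hh hsgn).sub
      ((hweak φ (hφ.mono_exponent le_top)).const_mul 2)
    convert hlim using 2
    have hσh : Integrable (fun t => sgn01 (v t) * h t) μ := hσ₀.mul_of_top_left hh
    have hvφ : Integrable (fun t => v t * φ t) μ := (hφ.mul' hv).integrable le_top
    rw [← integral_const_mul, ← integral_sub hσh (hvφ.const_mul 2)]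
    refine integral_congr_ae ?_
    filter_upwards [hv₀] with t ht
    simp [φ, h, sgn01_mul_sub_two_mul _ _ _ _ ht]
  · have hσh : Integrable (fun t => sgn01 (w k t) * h t) μ :=
      ((hσ k).integrable le_top).mul_of_top_left hh
    have hwφ : Integrable (fun t => w k t * φ t) μ := (hφ.mul' (hw k)).integrable le_top
    have hsq : Integrable (fun t => sgn01 (u t) * sgn01 (w k t) * (u t - w k t) ^ 2) μ :=
      ((hu.sub (hw k)).mono_exponent le_top).integrable_sq.mul_of_top_right ((hσ k).mul' hs)
    dsimp only
    rw [← integral_const_mul, ← integral_sub hσh (hwφ.const_mul 2)]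
    refine integral_mono_ae (hσh.sub (hwφ.const_mul 2)) hsq ?_
    filter_upwards [hw₀ k] with t ht
    simp only [φ, h, sgn01_mul_sub_two_mul _ _ _ _ ht]
    exact sub_le_self _ (mul_nonneg (mul_nonneg (sgn01_nonneg _) (sgn01_nonneg _)) (sq_nonneg _))

end

theorem lsc_of_active_set_norm_general
    (t₀ T a : ℝ) (ha : 0 < a) (N : ℕ)
    (aa bb : Fin N → ℝ)
    (haa : ∀ i, a ≤ aa i) (habi : ∀ i, aa i ≤ bb i)
    (μ : Measure ℝ) (hμ : μ = volume.restrict (Set.Ioo t₀ T))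
    (u wbar : ℝ → Fin N → ℝ) (w : ℕ → ℝ → Fin N → ℝ)
    (hu_meas : ∀ i, Measurable fun t : ℝ => u t i)
    (hwbar_meas : ∀ i, Measurable fun t : ℝ => wbar t i)
    (hw_meas : ∀ k i, Measurable fun t : ℝ => w k t i)
    -- values in `{0} ∪ [aᵢ,bᵢ]` a.e.
    (hu_vals : ∀ i, ∀ᵐ t ∂μ, u t i ∈ ({0} : Set ℝ) ∪ Set.Icc (aa i) (bb i))
    (hwbar_vals : ∀ i, ∀ᵐ t ∂μ, wbar t i ∈ ({0} : Set ℝ) ∪ Set.Icc (aa i) (bb i))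
    (hw_vals : ∀ k i, ∀ᵐ t ∂μ, w k t i ∈ ({0} : Set ℝ) ∪ Set.Icc (aa i) (bb i))
    -- weak convergence `w_k ⇀ w̄` in `L²(t₀,T;ℝᴺ)`
    (hweak : ∀ ψ : ℝ → Fin N → ℝ, MemLp ψ 2 μ →
      Tendsto (fun k : ℕ => ∫ t, ∑ i : Fin N, w k t i * ψ t i ∂μ) atTop
        (𝓝 (∫ t, ∑ i : Fin N, wbar t i * ψ t i ∂μ)))
    -- convergence `sgn(w_k) → sgn(w̄)` in `L¹(t₀,T;ℝᴺ)`
    (hsgn : Tendsto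
      (fun k : ℕ => ∫ t, ∑ i : Fin N, |sgn01 (w k t i) - sgn01 (wbar t i)| ∂μ)
      atTop (𝓝 0)) :
    ∑ i : Fin N,
        ∫ t, Set.indicator {t : ℝ | 0 < u t i ∧ 0 < wbar t i}
          (fun t => |u t i - wbar t i| ^ 2) t ∂μ ≤
      liminf (fun k : ℕ => ∑ i : Fin N,
        ∫ t, Set.indicator {t : ℝ | 0 < u t i ∧ 0 < w k t i}
          (fun t => |u t i - w k t i| ^ 2) t ∂μ) atTop := by
  have : IsFiniteMeasure μ := hμ ▸ inferInstance
  have hIcc : ∀ v : ℝ → Fin N → ℝ, (∀ i, ∀ᵐ t ∂μ, v t i ∈ ({0} : Set ℝ) ∪ Icc (aa i) (bb i)) →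
      ∀ i, ∀ᵐ t ∂μ, v t i ∈ Icc 0 (bb i) := fun v hv i =>
    (hv i).mono fun t ht => singleton_zero_union_Icc_subset_Icc (ha.le.trans (haa i)) (habi i) ht
  have hu := hIcc u hu_vals
  have hwbar := hIcc wbar hwbar_vals
  have hw := fun k => hIcc (w k) (hw_vals k)
  have hsgn_compnt : ∀ k i, Integrable (fun t => |sgn01 (w k t i) - sgn01 (wbar t i)|) μ :=
    fun k i => (((memLp_top_sgn01_comp (hw_meas k i).aemeasurable).sub
      (memLp_top_sgn01_comp (hwbar_meas i).aemeasurable)).integrable le_top).abs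
  have hsgn_comp := tendsto_integral_of_tendsto_integral_sum hsgn_compnt
    (fun k i => ae_of_all _ fun t => abs_nonneg _) hsgn
  choose G hG hGF using fun i => exists_tendsto_le_integral_sgn01_mul_sq
    (memLp_top_of_ae_mem_Icc (hu_meas i) (hu i)) (memLp_top_of_ae_mem_Icc (hwbar_meas i) (hwbar i))
    (fun k => memLp_top_of_ae_mem_Icc (hw_meas k i) (hw k i))
    ((hwbar i).mono fun t ht => ht.1) (fun k => (hw k i).mono fun t ht => ht.1)
    (hsgn_comp i) (fun φ hφ => tendsto_integral_mul_of_tendsto_integral_sum_mul hweak i hφ)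
  simp only [indicator_setOf_pos_and_pos, sq_abs]
  exact le_liminf_of_tendsto_of_le (tendsto_finsetSum _ fun i _ => hG i)
    (Eventually.of_forall fun k => Finset.sum_le_sum fun i _ => hGF i k)
    (isBoundedUnder_of ⟨∑ i, bb i ^ 2 * μ.real univ,
      fun k => Finset.sum_le_sum fun i _ => integral_sgn01_mul_sq_le (hu i) (hw k i)⟩)

/-- Lemma 4.9 / `lem:something_is_lsc`: lower semicontinuity of the squared `L²` norm
restricted to the set where both controls are active. -/
theorem lsc_of_active_set_norm
    (t₀ T a b : ℝ) (ht : t₀ < T) (ha : 0 < a) (N : ℕ)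
    (aa bb : Fin N → ℝ)
    (haa : ∀ i, a ≤ aa i) (habi : ∀ i, aa i ≤ bb i) (hbb : ∀ i, bb i ≤ b)
    (μ : Measure ℝ) (hμ : μ = volume.restrict (Set.Ioo t₀ T))
    (u wbar : ℝ → Fin N → ℝ) (w : ℕ → ℝ → Fin N → ℝ)
    (hu_meas : ∀ i, Measurable fun t : ℝ => u t i)
    (hwbar_meas : ∀ i, Measurable fun t : ℝ => wbar t i)
    (hw_meas : ∀ k i, Measurable fun t : ℝ => w k t i)
    -- values in `{0} ∪ [aᵢ,bᵢ]` a.e.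
    (hu_vals : ∀ i, ∀ᵐ t ∂μ, u t i ∈ ({0} : Set ℝ) ∪ Set.Icc (aa i) (bb i))
    (hwbar_vals : ∀ i, ∀ᵐ t ∂μ, wbar t i ∈ ({0} : Set ℝ) ∪ Set.Icc (aa i) (bb i))
    (hw_vals : ∀ k i, ∀ᵐ t ∂μ, w k t i ∈ ({0} : Set ℝ) ∪ Set.Icc (aa i) (bb i))
    -- weak convergence `w_k ⇀ w̄` in `L²(t₀,T;ℝᴺ)`
    (hweak : ∀ ψ : ℝ → Fin N → ℝ, MemLp ψ 2 μ →
      Tendsto (fun k : ℕ => ∫ t, ∑ i : Fin N, w k t i * ψ t i ∂μ) atTop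
        (𝓝 (∫ t, ∑ i : Fin N, wbar t i * ψ t i ∂μ)))
    -- convergence `sgn(w_k) → sgn(w̄)` in `L¹(t₀,T;ℝᴺ)`
    (hsgn : Tendsto
      (fun k : ℕ => ∫ t, ∑ i : Fin N, |sgn01 (w k t i) - sgn01 (wbar t i)| ∂μ)
      atTop (𝓝 0)) :
    ∑ i : Fin N,
        ∫ t, Set.indicator {t : ℝ | 0 < u t i ∧ 0 < wbar t i}
          (fun t => |u t i - wbar t i| ^ 2) t ∂μ ≤
      liminf (fun k : ℕ => ∑ i : Fin N,
        ∫ t, Set.indicator {t : ℝ | 0 < u t i ∧ 0 < w k t i}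
          (fun t => |u t i - w k t i| ^ 2) t ∂μ) atTop :=
  lsc_of_active_set_norm_general t₀ T a ha N aa bb haa habi μ hμ u wbar w hu_meas hwbar_meas hw_meas
    hu_vals hwbar_vals hw_vals hweak hsgn
end
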